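/- arXiv:2208.11579 — 8 statements merged into one kernel-verified Lean document; each statement's English description precedes it below -/
import Mathlib

section
/- Let p be a prime with p ≡ 3 (mod 4). If u, v ∈ 𝔽_p² \ {(0,0)} and r is a nonzero quadratic residue in 𝔽_p such that ‖u‖ = r‖v‖, then there exists a unique θ ∈ SO₂(𝔽_p) such that u = √r · θ v, where √r is a fixed element of 𝔽_p whose square is r. -/
open Matrix

def sqnorm {p d : ℕ} (α : Fin d → ZMod p) : ZMod p := ∑ i, α i ^ 2

/-! The matrices of `SO₂(K)` are the rotations `!![a, -b; b, a]` with `a ^ 2 + b ^ 2 = 1`, which act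
on `K²` as multiplication by `a + b i`. Since `-1` is not a square in `𝔽_p`, a nonzero `v` has
nonzero norm, so `u = s • θ *ᵥ v` can be solved for `(a, b)` by dividing by `s ‖v‖`:
`a = (u₀ v₀ + u₁ v₁) / (s ‖v‖)` and `b = (u₁ v₀ - u₀ v₁) / (s ‖v‖)`; the norm condition is exactly
`a ^ 2 + b ^ 2 = 1`. -/

lemma sqnorm_fin_two {p : ℕ} (v : Fin 2 → ZMod p) : sqnorm v = v 0 ^ 2 + v 1 ^ 2 :=
  Fin.sum_univ_two _

lemma eq_zero_of_sq_add_sq_eq_zero {K : Type*} [Field K] (h : ¬IsSquare (-1 : K)) {x y : K}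
    (hxy : x ^ 2 + y ^ 2 = 0) : x = 0 := by
  by_contra hx
  exact h ⟨y / x, by field_simp; linear_combination -hxy⟩

lemma sq_add_sq_ne_zero_of_ne_zero {K : Type*} [Field K] (h : ¬IsSquare (-1 : K))
    {v : Fin 2 → K} (hv : v ≠ 0) : v 0 ^ 2 + v 1 ^ 2 ≠ 0 := by
  refine fun h₀ ↦ hv (funext fun i ↦ ?_)
  fin_cases i
  · exact eq_zero_of_sq_add_sq_eq_zero h h₀
  · exact eq_zero_of_sq_add_sq_eq_zero h (by rwa [add_comm] at h₀)

section Rotation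

attribute [local instance] starRingOfComm

lemma transpose_mul_self_eq_one_and_det_eq_one_iff {R : Type*} [CommRing R]
    {θ : Matrix (Fin 2) (Fin 2) R} :
    θᵀ * θ = 1 ∧ θ.det = 1 ↔ ∃ a b : R, a ^ 2 + b ^ 2 = 1 ∧ θ = !![a, -b; b, a] := by
  rw [← mem_orthogonalGroup_iff', ← mem_specialOrthogonalGroup_iff,
    mem_specialOrthogonalGroup_fin_two_iff]
  constructor
  · rintro ⟨h₀, h₁, h⟩
    refine ⟨θ 0 0, θ 1 0, by rwa [h₁, neg_sq] at h, ?_⟩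
    ext i j
    fin_cases i <;> fin_cases j <;> simp [h₀, h₁]
  · rintro ⟨a, b, h, rfl⟩
    simpa using h

end Rotation

lemma rotation_mulVec {R : Type*} [CommRing R] (a b : R) (v : Fin 2 → R) :
    !![a, -b; b, a] *ᵥ v = ![a * v 0 - b * v 1, b * v 0 + a * v 1] := by
  ext i; fin_cases i <;> simp [mulVec, dotProduct, Fin.sum_univ_two, sub_eq_add_neg]

section Field

variable {K : Type*} [Field K]

lemma rotation_eq_of_smul_mulVec_eq {a b a' b' c : K} {v : Fin 2 → K} (hc : c ≠ 0)
    (hv : v 0 ^ 2 + v 1 ^ 2 ≠ 0) (h : c • !![a, -b; b, a] *ᵥ v = c • !![a', -b'; b', a'] *ᵥ v) :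
    !![a, -b; b, a] = !![a', -b'; b', a'] := by
  rw [(smul_right_injective _ hc).eq_iff, rotation_mulVec, rotation_mulVec] at h
  have h₀ := congrFun h 0
  have h₁ := congrFun h 1
  simp only [cons_val_zero, cons_val_one] at h₀ h₁
  have ha : a = a' := mul_right_cancel₀ hv (by linear_combination v 0 * h₀ + v 1 * h₁)
  have hb : b = b' := mul_right_cancel₀ hv (by linear_combination v 0 * h₁ - v 1 * h₀)
  rw [ha, hb]

lemma exists_rotation_smul_mulVec_eq {u v : Fin 2 → K} {c : K} (hc : c ≠ 0)
    (hv : v 0 ^ 2 + v 1 ^ 2 ≠ 0) (huv : u 0 ^ 2 + u 1 ^ 2 = c ^ 2 * (v 0 ^ 2 + v 1 ^ 2)) :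
    ∃ a b : K, a ^ 2 + b ^ 2 = 1 ∧ u = c • !![a, -b; b, a] *ᵥ v := by
  have hcv : c * (v 0 ^ 2 + v 1 ^ 2) ≠ 0 := mul_ne_zero hc hv
  refine ⟨(u 0 * v 0 + u 1 * v 1) / (c * (v 0 ^ 2 + v 1 ^ 2)),
    (u 1 * v 0 - u 0 * v 1) / (c * (v 0 ^ 2 + v 1 ^ 2)), ?_, ?_⟩
  · field_simp
    linear_combination (v 0 ^ 2 + v 1 ^ 2) * huv
  · rw [rotation_mulVec]
    ext i
    fin_cases i <;>
    · simp only [Fin.zero_eta, Fin.mk_one, Pi.smul_apply, cons_val_zero, cons_val_one, smul_eq_mul]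
      field_simp
      ring

theorem existsUnique_specialOrthogonal_smul_mulVec_eq {u v : Fin 2 → K} {c : K} (hc : c ≠ 0)
    (hv : v 0 ^ 2 + v 1 ^ 2 ≠ 0) (huv : u 0 ^ 2 + u 1 ^ 2 = c ^ 2 * (v 0 ^ 2 + v 1 ^ 2)) :
    ∃! θ : Matrix (Fin 2) (Fin 2) K, θᵀ * θ = 1 ∧ θ.det = 1 ∧ u = c • θ *ᵥ v := by
  simp only [← and_assoc, transpose_mul_self_eq_one_and_det_eq_one_iff]
  obtain ⟨a, b, hab, hu⟩ := exists_rotation_smul_mulVec_eq hc hv huv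
  refine ⟨!![a, -b; b, a], ⟨⟨a, b, hab, rfl⟩, hu⟩, ?_⟩
  rintro _ ⟨⟨a', b', -, rfl⟩, hu'⟩
  exact rotation_eq_of_smul_mulVec_eq hc hv (hu' ▸ hu)

end Field

theorem stmt0_general (p : ℕ) [Fact p.Prime] (hp4 : p % 4 = 3)
    (u v : Fin 2 → ZMod p) (hv : v ≠ 0)
    (r s : ZMod p) (hr : r ≠ 0) (hs : s ^ 2 = r)
    (huv : sqnorm u = r * sqnorm v) :
    ∃! θ : Matrix (Fin 2) (Fin 2) (ZMod p),
      θᵀ * θ = 1 ∧ θ.det = 1 ∧ u = s • θ.mulVec v := by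
  have hs₀ : s ≠ 0 := by rintro rfl; exact hr (by simp [← hs])
  have hsq : ¬IsSquare (-1 : ZMod p) := by
    rw [ZMod.exists_sq_eq_neg_one_iff]; exact not_not.mpr hp4
  rw [sqnorm_fin_two, sqnorm_fin_two, ← hs] at huv
  exact existsUnique_specialOrthogonal_smul_mulVec_eq hs₀ (sq_add_sq_ne_zero_of_ne_zero hsq hv) huv

theorem stmt0 (p : ℕ) [Fact p.Prime] (hp4 : p % 4 = 3)
    (u v : Fin 2 → ZMod p) (hu : u ≠ 0) (hv : v ≠ 0)
    (r s : ZMod p) (hr : r ≠ 0) (hs : s ^ 2 = r)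
    (huv : sqnorm u = r * sqnorm v) :
    ∃! θ : Matrix (Fin 2) (Fin 2) (ZMod p),
      θᵀ * θ = 1 ∧ θ.det = 1 ∧ u = s • θ.mulVec v :=
  stmt0_general p hp4 u v hv r s hr hs huv
end

section
/- Let G be a simple graph with n vertices and e(G) edges, and k ≥ 1. Then the number of homomorphic images of the k-path, i.e., |{(v₁, …, v_{k+1}) ∈ V^{k+1} : vᵢvᵢ₊₁ is an edge of G for all i ∈ [k]}|, is at least (2e(G))^k / n^{k−1}. -/
/-!
Let `m = 2e(G)` and run the stationary simple random walk for `k` steps. Its law is a probability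
distribution on the homomorphic `k`-paths, and by stationarity each of its `k + 1` positions is
distributed like the degree distribution `d / m`. Computing its entropy through these marginals
gives `log m + (k - 1) ∑ᵥ (d v / m) log (d v)`, which is at most the logarithm of the number of
`k`-paths. The entropy of `d / m` itself, `log m - ∑ᵥ (d v / m) log (d v)`, is at most `log n`.
Eliminating `∑ᵥ (d v / m) log (d v)` yields the inequality in logarithmic form.
-/

open Finset Real

/-- The entropy of the distribution `f / ∑ f` is at most `log #s`, multiplied through by `∑ f`. -/
theorem Real.sum_mul_log_div_le_mul_log_card {ι : Type*} (s : Finset ι) {f : ι → ℝ}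
    (hf : ∀ i ∈ s, 0 ≤ f i) :
    ∑ i ∈ s, f i * log ((∑ j ∈ s, f j) / f i) ≤ (∑ j ∈ s, f j) * log #s := by
  rcases s.eq_empty_or_nonempty with rfl | hs
  · simp
  set m := ∑ j ∈ s, f j
  have hN : (0 : ℝ) < #s := by exact_mod_cast hs.card_pos
  have hpoint : ∀ i ∈ s, f i * log (m / f i) ≤ f i * log #s + (m / #s - f i) := by
    intro i hi
    have hm : f i ≤ m := single_le_sum hf hi
    rcases (hf i hi).eq_or_lt with h | h
    · rw [← h, zero_mul, zero_mul, zero_add, sub_zero]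
      exact div_nonneg (h ▸ hm) hN.le
    have hm0 : 0 < m := h.trans_le hm
    have hlog : log (m / f i) = log (m / (f i * #s)) + log #s := by
      rw [← log_mul (by positivity) hN.ne']
      field_simp
    calc f i * log (m / f i) = f i * log (m / (f i * #s)) + f i * log #s := by
          rw [hlog, mul_add]
      _ ≤ f i * (m / (f i * #s) - 1) + f i * log #s := by
          gcongr
          exact log_le_sub_one_of_pos (by positivity)
      _ = f i * log #s + (m / #s - f i) := by
          field_simp
          ring
  calc ∑ i ∈ s, f i * log (m / f i) ≤ ∑ i ∈ s, (f i * log #s + (m / #s - f i)) :=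
        sum_le_sum hpoint
    _ = m * log #s := by
        rw [sum_add_distrib, ← sum_mul, sum_sub_distrib, sum_const, nsmul_eq_mul,
          mul_div_cancel₀ _ hN.ne', sub_self, add_zero]

namespace SimpleGraph

variable {V : Type*} [Fintype V] (G : SimpleGraph V) [DecidableRel G.Adj]

def pathHoms (k : ℕ) : Finset (Fin (k + 1) → V) :=
  {ω | ∀ i : Fin k, G.Adj (ω i.castSucc) (ω i.succ)}

variable {G}

lemma mem_pathHoms {k : ℕ} {ω : Fin (k + 1) → V} :
    ω ∈ G.pathHoms k ↔ ∀ i : Fin k, G.Adj (ω i.castSucc) (ω i.succ) := by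
  simp [pathHoms]

lemma snoc_mem_pathHoms_iff {k : ℕ} {ω : Fin (k + 1) → V} {v : V} :
    Fin.snoc ω v ∈ G.pathHoms (k + 1) ↔ ω ∈ G.pathHoms k ∧ G.Adj (ω (Fin.last k)) v := by
  simp [mem_pathHoms, Fin.forall_fin_succ', ← Fin.castSucc_succ]

lemma sum_pathHoms_succ {M : Type*} [AddCommMonoid M] (k : ℕ) (F : (Fin (k + 2) → V) → M) :
    ∑ ω ∈ G.pathHoms (k + 1), F ω =
      ∑ ω ∈ G.pathHoms k, ∑ v ∈ G.neighborFinset (ω (Fin.last k)), F (Fin.snoc ω v) := by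
  rw [sum_sigma']
  refine sum_bij' (fun ω _ ↦ ⟨Fin.init ω, ω (Fin.last _)⟩) (fun p _ ↦ Fin.snoc p.1 p.2)
    ?_ ?_ ?_ ?_ ?_
  · intro ω hω
    rw [← Fin.snoc_init_self ω, snoc_mem_pathHoms_iff] at hω
    simpa using hω
  · rintro ⟨ω, v⟩ h
    simpa [snoc_mem_pathHoms_iff] using h
  all_goals simp

lemma sum_sum_neighborFinset {M : Type*} [AddCommMonoid M] (g : V → M) :
    ∑ u, ∑ v ∈ G.neighborFinset u, g v = ∑ v, G.degree v • g v := by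
  rw [sum_comm' (t' := univ) (s' := fun v ↦ G.neighborFinset v) (by simp [adj_comm])]
  simp [card_neighborFinset_eq_degree]

variable (G) in
/-- `2e(G)` times the probability that the stationary simple random walk traverses `ω` backwards,
from `ω k` to `ω 0`. -/
noncomputable def walkWeight {k : ℕ} (ω : Fin (k + 1) → V) : ℝ :=
  G.degree (ω (Fin.last k)) * ∏ i : Fin k, (G.degree (ω i.succ) : ℝ)⁻¹

lemma walkWeight_snoc {k : ℕ} {ω : Fin (k + 1) → V} {v : V} (h : G.Adj (ω (Fin.last k)) v) :
    G.walkWeight (Fin.snoc ω v) = ∏ i : Fin k, (G.degree (ω i.succ) : ℝ)⁻¹ := by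
  have hv : (G.degree v : ℝ) ≠ 0 := by
    exact_mod_cast ((G.degree_pos_iff_exists_adj v).2 ⟨_, h.symm⟩).ne'
  rw [walkWeight, Fin.prod_univ_castSucc, Fin.succ_last, Fin.snoc_last, mul_comm,
    mul_assoc, inv_mul_cancel₀ hv, mul_one]
  exact prod_congr rfl fun i _ ↦ by rw [← Fin.castSucc_succ, Fin.snoc_castSucc]

lemma sum_neighborFinset_div_mul_degree (g : V → ℝ) (u : V) :
    (∑ v ∈ G.neighborFinset u, g v) / G.degree u * G.degree u =
      ∑ v ∈ G.neighborFinset u, g v := by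
  refine div_mul_cancel_of_imp fun h ↦ ?_
  rw [Nat.cast_eq_zero, ← card_neighborFinset_eq_degree, card_eq_zero] at h
  rw [h, sum_empty]

theorem sum_pathHoms_mul_walkWeight (k : ℕ) (i : Fin (k + 1)) (g : V → ℝ) :
    ∑ ω ∈ G.pathHoms k, g (ω i) * G.walkWeight ω = ∑ v, g v * G.degree v := by
  induction k generalizing g with
  | zero =>
    rw [Fin.fin_one_eq_zero i, show G.pathHoms 0 = univ by ext; simp [mem_pathHoms]]
    exact Fintype.sum_equiv (Equiv.funUnique (Fin 1) V) _ _ fun ω ↦ by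
      simp only [walkWeight, univ_eq_empty, prod_empty, mul_one]; rfl
  | succ k ih =>
    set P := fun ω : Fin (k + 1) → V ↦ ∏ i : Fin k, (G.degree (ω i.succ) : ℝ)⁻¹
    have hsnoc (ω : Fin (k + 1) → V) (f : V → ℝ) :
        ∑ v ∈ G.neighborFinset (ω (Fin.last k)), f v * G.walkWeight (Fin.snoc ω v) =
          (∑ v ∈ G.neighborFinset (ω (Fin.last k)), f v) * P ω := by
      rw [sum_mul]
      exact sum_congr rfl fun v hv ↦ by rw [walkWeight_snoc ((G.mem_neighborFinset _ _).1 hv)]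
    rw [sum_pathHoms_succ]
    induction i using Fin.lastCases with
    | last =>
      simp only [Fin.snoc_last, hsnoc]
      calc ∑ ω ∈ G.pathHoms k, (∑ v ∈ G.neighborFinset (ω (Fin.last k)), g v) * P ω
          = ∑ ω ∈ G.pathHoms k, (∑ v ∈ G.neighborFinset (ω (Fin.last k)), g v) /
              G.degree (ω (Fin.last k)) * G.walkWeight ω := by
            refine sum_congr rfl fun ω _ ↦ ?_
            rw [walkWeight, ← mul_assoc, sum_neighborFinset_div_mul_degree]
        _ = ∑ v, g v * G.degree v := by
          rw [ih (Fin.last k) fun u ↦ (∑ v ∈ G.neighborFinset u, g v) / G.degree u]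
          rw [sum_congr rfl fun u _ ↦ sum_neighborFinset_div_mul_degree g u,
            sum_sum_neighborFinset]
          simp only [nsmul_eq_mul, mul_comm]
    | cast j =>
      simp only [Fin.snoc_castSucc, ← mul_sum]
      rw [← ih j g]
      refine sum_congr rfl fun ω _ ↦ ?_
      have := hsnoc ω 1
      simp only [Pi.one_apply, one_mul, sum_const, card_neighborFinset_eq_degree, nsmul_one] at this
      rw [this, walkWeight]

lemma degree_succ_pos_of_mem_pathHoms {k : ℕ} {ω : Fin (k + 1) → V} (hω : ω ∈ G.pathHoms k)
    (i : Fin k) : 0 < G.degree (ω i.succ) :=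
  (G.degree_pos_iff_exists_adj _).2 ⟨_, (mem_pathHoms.1 hω i).symm⟩

variable (G) in
lemma walkWeight_nonneg {k : ℕ} (ω : Fin (k + 1) → V) : 0 ≤ G.walkWeight ω := by
  unfold walkWeight; positivity

lemma degree_last_pos_of_mem_pathHoms {k : ℕ} {ω : Fin (k + 2) → V}
    (hω : ω ∈ G.pathHoms (k + 1)) : 0 < G.degree (ω (Fin.last (k + 1))) := by
  rw [← Fin.succ_last]
  exact degree_succ_pos_of_mem_pathHoms hω _

lemma walkWeight_pos {k : ℕ} {ω : Fin (k + 2) → V} (hω : ω ∈ G.pathHoms (k + 1)) :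
    0 < G.walkWeight ω := by
  have hsucc := degree_succ_pos_of_mem_pathHoms hω
  exact mul_pos (Nat.cast_pos.2 (degree_last_pos_of_mem_pathHoms hω))
    (prod_pos fun i _ ↦ inv_pos.2 (Nat.cast_pos.2 (hsucc i)))

lemma log_walkWeight {k : ℕ} {ω : Fin (k + 2) → V} (hω : ω ∈ G.pathHoms (k + 1)) :
    log (G.walkWeight ω) =
      log (G.degree (ω (Fin.last (k + 1)))) - ∑ i : Fin (k + 1), log (G.degree (ω i.succ)) := by
  have hsucc (i : Fin (k + 1)) : (G.degree (ω i.succ) : ℝ)⁻¹ ≠ 0 := by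
    simpa using (degree_succ_pos_of_mem_pathHoms hω i).ne'
  rw [walkWeight, log_mul (by exact_mod_cast (degree_last_pos_of_mem_pathHoms hω).ne')
    (prod_ne_zero_iff.2 fun i _ ↦ hsucc i), log_prod fun i _ ↦ hsucc i]
  simp only [log_inv, sum_neg_distrib, sub_eq_add_neg]

lemma sum_walkWeight (k : ℕ) : ∑ ω ∈ G.pathHoms k, G.walkWeight ω = 2 * #G.edgeFinset := by
  have := sum_pathHoms_mul_walkWeight (G := G) k 0 1
  simp only [Pi.one_apply, one_mul] at this
  rw [this]
  exact_mod_cast G.sum_degrees_eq_twice_card_edges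

lemma sum_walkWeight_mul_log_div (k : ℕ) :
    ∑ ω ∈ G.pathHoms (k + 1), G.walkWeight ω * log (2 * #G.edgeFinset / G.walkWeight ω) =
      2 * #G.edgeFinset * log (2 * #G.edgeFinset) + k * ∑ v, log (G.degree v) * G.degree v := by
  have hterm : ∀ ω ∈ G.pathHoms (k + 1),
      G.walkWeight ω * log (2 * #G.edgeFinset / G.walkWeight ω) =
        log (2 * #G.edgeFinset) * G.walkWeight ω -
          log (G.degree (ω (Fin.last (k + 1)))) * G.walkWeight ω +
            ∑ i : Fin (k + 1), log (G.degree (ω i.succ)) * G.walkWeight ω := by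
    intro ω hω
    have hq := walkWeight_pos hω
    have hm : (0 : ℝ) < 2 * #G.edgeFinset := by
      rw [← sum_walkWeight (k + 1)]
      exact hq.trans_le (single_le_sum (fun ω _ ↦ G.walkWeight_nonneg ω) hω)
    rw [log_div hm.ne' hq.ne', log_walkWeight hω, ← sum_mul]
    ring
  rw [sum_congr rfl hterm, sum_add_distrib, sum_sub_distrib, ← mul_sum, sum_walkWeight,
    sum_comm, sum_pathHoms_mul_walkWeight (k + 1) (Fin.last (k + 1)) fun v ↦ log (G.degree v)]
  simp only [sum_pathHoms_mul_walkWeight (k + 1) (Fin.succ _) fun v ↦ log (G.degree v),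
    sum_const, card_univ, Fintype.card_fin]
  ring

theorem le_log_card_pathHoms (k : ℕ) (hE : 0 < #G.edgeFinset) :
    (k + 1) * log (2 * #G.edgeFinset) - k * log (Fintype.card V) ≤
      log #(G.pathHoms (k + 1)) := by
  set m : ℝ := 2 * #G.edgeFinset with hm_def
  set S := ∑ v, log (G.degree v) * G.degree v
  have hm : 0 < m := by positivity
  have hdeg : ∑ v, (G.degree v : ℝ) = m := by
    rw [hm_def]; exact_mod_cast G.sum_degrees_eq_twice_card_edges
  have hwalks : m * log m + k * S ≤ m * log #(G.pathHoms (k + 1)) := by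
    have := sum_mul_log_div_le_mul_log_card (G.pathHoms (k + 1))
      fun ω _ ↦ G.walkWeight_nonneg ω
    rwa [sum_walkWeight, sum_walkWeight_mul_log_div] at this
  have hvertices : m * log m - S ≤ m * log (Fintype.card V) := by
    have := sum_mul_log_div_le_mul_log_card (f := fun v ↦ (G.degree v : ℝ)) univ
      fun v _ ↦ Nat.cast_nonneg _
    rw [hdeg, card_univ] at this
    refine le_trans (le_of_eq ?_) this
    have hterm (v : V) : (G.degree v : ℝ) * log (m / G.degree v) =
        G.degree v * log m - log (G.degree v) * G.degree v := by
      rcases eq_or_ne (G.degree v : ℝ) 0 with h | h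
      · simp [h]
      · rw [log_div hm.ne' h]; ring
    rw [sum_congr rfl fun v _ ↦ hterm v, sum_sub_distrib, ← sum_mul, hdeg]
  have := mul_le_mul_of_nonneg_left hvertices k.cast_nonneg
  refine le_of_mul_le_mul_left ?_ hm
  linarith

end SimpleGraph

theorem stmt5 (V : Type*) [Fintype V] (G : SimpleGraph V) [DecidableRel G.Adj]
    (k : ℕ) (hk : 1 ≤ k) :
    (2 * (G.edgeFinset.card : ℝ)) ^ k / (Fintype.card V : ℝ) ^ (k - 1)
      ≤ (Nat.card {v : Fin (k + 1) → V |
          ∀ i : Fin k, G.Adj (v i.castSucc) (v i.succ)} : ℝ) := by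
  obtain ⟨k, rfl⟩ := Nat.exists_eq_add_of_le' hk
  have hcard : Nat.card {v : Fin (k + 2) → V |
      ∀ i : Fin (k + 1), G.Adj (v i.castSucc) (v i.succ)} = #(G.pathHoms (k + 1)) := by
    rw [Nat.card_eq_card_toFinset]; congr; ext; simp [SimpleGraph.mem_pathHoms]
  rw [hcard, Nat.add_sub_cancel]
  rcases (Nat.zero_le #G.edgeFinset).eq_or_lt with hE | hE
  · simp [← hE]
  have hW : 0 < #(G.pathHoms (k + 1)) := by
    refine card_pos.2 (nonempty_of_sum_ne_zero (f := G.walkWeight) ?_)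
    rw [SimpleGraph.sum_walkWeight]; positivity
  obtain ⟨ω, -⟩ := card_pos.1 hW
  have hn : 0 < Fintype.card V := Fintype.card_pos_iff.2 ⟨ω 0⟩
  rw [← log_le_log_iff (by positivity) (by positivity), log_div (by positivity) (by positivity),
    log_pow, log_pow]
  exact_mod_cast G.le_log_card_pathHoms k hE
end

section
/- Let p ≡ 3 (mod 4) be a prime, r ∈ 𝔽_p*, and E ⊆ 𝔽_p² with |E| > (√3 + 1)p. Then there exist (x₁,x₂,x₃) ∈ E³ and (y₁,y₂,y₃) ∈ E³ such that ‖yᵢ − yᵢ₊₁‖ = r‖xᵢ − xᵢ₊₁‖ for i = 1,2, and xᵢ ≠ xⱼ, yᵢ ≠ yⱼ for all i ≠ j. -/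
open Function Finset

/-- Multiplication by `c + d i`, acting on coordinates. -/
def rotationDilation {R : Type*} [CommRing R] (c d : R) : (Fin 2 → R) →ₗ[R] (Fin 2 → R) :=
  Matrix.mulVecLin !![c, -d; d, c]

theorem rotationDilation_injective {R : Type*} [CommRing R] {c d : R}
    (h : IsUnit (c ^ 2 + d ^ 2)) : Injective (rotationDilation c d) :=
  Matrix.mulVec_injective_of_isUnit <| (Matrix.isUnit_iff_isUnit_det _).2 <| by
    rw [Matrix.det_fin_two_of]
    convert h using 1
    ring

theorem sqnorm_rotationDilation {p : ℕ} (c d : ZMod p) (v : Fin 2 → ZMod p) :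
    sqnorm (rotationDilation c d v) = (c ^ 2 + d ^ 2) * sqnorm v := by
  simp only [sqnorm, rotationDilation, Matrix.mulVecLin_apply, Matrix.mulVec, dotProduct,
    Fin.sum_univ_two, Matrix.of_apply, Matrix.cons_val', Matrix.cons_val_zero,
    Matrix.cons_val_one, Matrix.empty_val', Matrix.cons_val_fin_one]
  ring

/-- Pigeonhole for `(x, y) ↦ y - g x` on `E × E`: some fiber holds `k + 1` pairs. -/
theorem exists_injective_sub_eq_map_sub {G : Type*} [AddCommGroup G] [Fintype G] [DecidableEq G]
    (g : G →+ G) (hg : Injective g) (E : Finset G) (k : ℕ) (hE : Fintype.card G * k < #E ^ 2) :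
    ∃ x y : Fin (k + 1) → G, (∀ i, x i ∈ E) ∧ (∀ i, y i ∈ E) ∧ Injective x ∧ Injective y ∧
      ∀ i j, y i - y j = g (x i - x j) := by
  obtain ⟨b, -, hb⟩ := exists_lt_card_fiber_of_mul_lt_card_of_maps_to
    (s := E ×ˢ E) (t := univ) (f := fun a => a.2 - g a.1) (n := k) (fun _ _ => mem_univ _)
    (by rwa [card_product, ← sq, card_univ])
  obtain ⟨f, hf⟩ := Embedding.exists_of_card_le_finset (α := Fin (k + 1)) (by simpa using hb)
  have hfE (i) : (f i).1 ∈ E ∧ (f i).2 ∈ E := by simpa using (mem_filter.1 (hf ⟨i, rfl⟩)).1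
  have hfb (i) : (f i).2 = b + g (f i).1 := by
    rw [← (mem_filter.1 (hf ⟨i, rfl⟩)).2, sub_add_cancel]
  refine ⟨fun i => (f i).1, fun i => (f i).2, fun i => (hfE i).1, fun i => (hfE i).2,
    fun i j h => f.injective (Prod.ext h ?_), fun i j h => f.injective (Prod.ext ?_ h), ?_⟩
  · simp only [hfb, h]
  · simp only [hfb, add_right_inj] at h
    exact hg h
  · intro i j
    simp only [hfb, map_sub]
    abel

theorem stmt6_general (p : ℕ) [Fact p.Prime]
    (r : ZMod p) (hr : r ≠ 0) (E : Finset (Fin 2 → ZMod p))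
    (hE : (Real.sqrt 3 + 1) * p < E.card) :
    ∃ x y : Fin 3 → (Fin 2 → ZMod p),
      (∀ i, x i ∈ E) ∧ (∀ i, y i ∈ E) ∧
      (∀ i : Fin 2, sqnorm (y i.castSucc - y i.succ) = r * sqnorm (x i.castSucc - x i.succ)) ∧
      (∀ i j, i ≠ j → x i ≠ x j ∧ y i ≠ y j) := by
  obtain ⟨c, d, hcd⟩ := ZMod.sq_add_sq p r
  have hg : Injective (rotationDilation c d) := rotationDilation_injective (hcd ▸ hr.isUnit)
  have hcard : Fintype.card (Fin 2 → ZMod p) * 2 < #E ^ 2 := by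
    have h3 : 1 ≤ Real.sqrt 3 := Real.one_le_sqrt.2 (by norm_num)
    have h2p : (2 * p : ℝ) < #E := by nlinarith [(Nat.cast_nonneg p : (0 : ℝ) ≤ p)]
    have : 2 * p < #E := by exact_mod_cast h2p
    rw [Fintype.card_fun, ZMod.card, Fintype.card_fin]
    nlinarith
  obtain ⟨x, y, hx, hy, hxi, hyi, hxy⟩ := exists_injective_sub_eq_map_sub
    (rotationDilation c d).toAddMonoidHom hg E 2 hcard
  refine ⟨x, y, hx, hy, fun i => ?_, fun i j hij => ⟨hxi.ne hij, hyi.ne hij⟩⟩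
  rw [hxy, LinearMap.toAddMonoidHom_coe, sqnorm_rotationDilation, hcd]

theorem stmt6 (p : ℕ) [Fact p.Prime] (hp4 : p % 4 = 3)
    (r : ZMod p) (hr : r ≠ 0) (E : Finset (Fin 2 → ZMod p))
    (hE : (Real.sqrt 3 + 1) * p < E.card) :
    ∃ x y : Fin 3 → (Fin 2 → ZMod p),
      (∀ i, x i ∈ E) ∧ (∀ i, y i ∈ E) ∧
      (∀ i : Fin 2, sqnorm (y i.castSucc - y i.succ) = r * sqnorm (x i.castSucc - x i.succ)) ∧
      (∀ i j, i ≠ j → x i ≠ x j ∧ y i ≠ y j) :=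
  stmt6_general p r hr E hE
end

section
/- Let p ≡ 3 (mod 4) be a prime, r ∈ 𝔽_p*, and E ⊆ 𝔽_p² with |E| > 4√3 · p^{3/2}. Then there exist (x₁,x₂,x₃,x₄) ∈ E⁴ and (y₁,y₂,y₃,y₄) ∈ E⁴ with xᵢ ≠ xⱼ and yᵢ ≠ yⱼ for i ≠ j, such that ‖yᵢ − yᵢ₊₁‖ = r‖xᵢ − xᵢ₊₁‖ for i = 1,2,3 and ‖y₄ − y₁‖ = r‖x₄ − x₁‖. -/
/-!
Write `r = a² + b²` (every element of `𝔽_p` is a sum of two squares). Multiplication by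
`a + b i`, i.e. `z ↦ (a z₀ - b z₁, b z₀ + a z₁)`, scales `‖·‖` by `r`, and so does every
map `z ↦ (a + b i) z + w`. Since `∑_w |E ∩ φ_w⁻¹(E)| = |E|²` and `|E|² > 3 p²`, some `φ_w`
maps at least four points of `E` into `E`; four such points and their images are the two
4-cycles.
-/

open Finset

section DoubleCounting

variable {G : Type*} [AddCommGroup G] [Fintype G] [DecidableEq G]

theorem sum_card_filter_add_mem (f : G → G) (s : Finset G) :
    ∑ w, #{x ∈ s | f x + w ∈ s} = #s * #s := by
  have translate (x : G) : ∑ w, (if f x + w ∈ s then 1 else 0) = #s := by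
    rw [Fintype.sum_equiv (Equiv.addLeft (f x)) (fun w => if f x + w ∈ s then 1 else 0)
      (fun w => if w ∈ s then 1 else 0) (fun _ => rfl), sum_boole, filter_mem_eq_inter,
      univ_inter, Nat.cast_id]
  simp_rw [card_filter]
  rw [sum_comm, sum_congr rfl fun x _ => translate x, sum_const, smul_eq_mul]

theorem exists_lt_card_filter_add_mem (f : G → G) {s : Finset G} {n : ℕ}
    (h : Fintype.card G * n < #s * #s) : ∃ w, n < #{x ∈ s | f x + w ∈ s} := by
  rw [← sum_card_filter_add_mem f s, ← smul_eq_mul, ← card_univ, ← sum_const] at h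
  obtain ⟨w, -, hw⟩ := exists_lt_of_sum_lt h
  exact ⟨w, hw⟩

end DoubleCounting

section ComplexMultiplication

/-- Multiplication by `a + b i` on `R²`. -/
def cmul {R : Type*} [CommRing R] (a b : R) (z : Fin 2 → R) : Fin 2 → R :=
  ![a * z 0 - b * z 1, b * z 0 + a * z 1]

theorem cmul_neg_cmul {R : Type*} [CommRing R] (a b : R) (z : Fin 2 → R) :
    cmul a (-b) (cmul a b z) = (a ^ 2 + b ^ 2) • z := by
  ext i
  fin_cases i <;> simp [cmul] <;> ring

theorem cmul_injective {K : Type*} [Field K] {a b : K} (h : a ^ 2 + b ^ 2 ≠ 0) :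
    Function.Injective (cmul a b) := fun u v huv =>
  smul_right_injective _ h <| by
    simpa only [cmul_neg_cmul] using congrArg (cmul a (-b)) huv

theorem sqnorm_cmul_sub_cmul {p : ℕ} (a b : ZMod p) (u v : Fin 2 → ZMod p) :
    sqnorm (cmul a b u - cmul a b v) = (a ^ 2 + b ^ 2) * sqnorm (u - v) := by
  simp only [sqnorm, Fin.sum_univ_two, cmul, Pi.sub_apply, Matrix.cons_val_zero,
    Matrix.cons_val_one]
  ring

end ComplexMultiplication

theorem two_mul_le_four_mul_sqrt_three_mul_rpow {x : ℝ} (hx : 1 ≤ x) :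
    2 * x ≤ 4 * Real.sqrt 3 * x ^ ((3 : ℝ) / 2) := by
  have hsqrt : 1 ≤ Real.sqrt 3 := Real.one_le_sqrt.mpr (by norm_num)
  have hrpow : x ≤ x ^ ((3 : ℝ) / 2) := by
    simpa using Real.rpow_le_rpow_of_exponent_le hx (show (1 : ℝ) ≤ 3 / 2 by norm_num)
  nlinarith

theorem stmt7_general (p : ℕ) [Fact p.Prime]
    (r : ZMod p) (hr : r ≠ 0) (E : Finset (Fin 2 → ZMod p))
    (hE : 4 * Real.sqrt 3 * (p : ℝ) ^ ((3 : ℝ) / 2) < E.card) :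
    ∃ x y : Fin 4 → (Fin 2 → ZMod p),
      (∀ i, x i ∈ E) ∧ (∀ i, y i ∈ E) ∧
      (∀ i : Fin 3, sqnorm (y i.castSucc - y i.succ) = r * sqnorm (x i.castSucc - x i.succ)) ∧
      sqnorm (y 3 - y 0) = r * sqnorm (x 3 - x 0) ∧
      (∀ i j, i ≠ j → x i ≠ x j ∧ y i ≠ y j) := by
  obtain ⟨a, b, rfl⟩ := ZMod.sq_add_sq p r
  have hcard : 2 * p < #E := by
    have hp : (1 : ℝ) ≤ p := by exact_mod_cast (Fact.out : p.Prime).one_le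
    exact_mod_cast (two_mul_le_four_mul_sqrt_three_mul_rpow hp).trans_lt hE
  have hsq : Fintype.card (Fin 2 → ZMod p) * 3 < #E * #E := by
    simp only [Fintype.card_fun, ZMod.card, Fintype.card_fin]
    nlinarith
  obtain ⟨w, hw⟩ := exists_lt_card_filter_add_mem (cmul a b) hsq
  obtain ⟨x, hx⟩ := Function.Embedding.exists_of_card_le_finset
    (α := Fin 4) (s := {x ∈ E | cmul a b x + w ∈ E}) (by rw [Fintype.card_fin]; exact hw)
  have hxE (i : Fin 4) : x i ∈ E ∧ cmul a b (x i) + w ∈ E := by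
    simpa using hx (Set.mem_range_self i)
  have hdist (i j : Fin 4) : sqnorm ((cmul a b (x i) + w) - (cmul a b (x j) + w))
      = (a ^ 2 + b ^ 2) * sqnorm (x i - x j) := by
    rw [add_sub_add_right_eq_sub, sqnorm_cmul_sub_cmul]
  refine ⟨x, fun i => cmul a b (x i) + w, fun i => (hxE i).1, fun i => (hxE i).2,
    fun i => hdist _ _, hdist _ _, fun i j hij => ⟨?_, ?_⟩⟩
  · exact x.injective.ne hij
  · exact ((add_left_injective w).comp (cmul_injective hr)).ne (x.injective.ne hij)

theorem stmt7 (p : ℕ) [Fact p.Prime] (hp4 : p % 4 = 3)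
    (r : ZMod p) (hr : r ≠ 0) (E : Finset (Fin 2 → ZMod p))
    (hE : 4 * Real.sqrt 3 * (p : ℝ) ^ ((3 : ℝ) / 2) < E.card) :
    ∃ x y : Fin 4 → (Fin 2 → ZMod p),
      (∀ i, x i ∈ E) ∧ (∀ i, y i ∈ E) ∧
      (∀ i : Fin 3, sqnorm (y i.castSucc - y i.succ) = r * sqnorm (x i.castSucc - x i.succ)) ∧
      sqnorm (y 3 - y 0) = r * sqnorm (x 3 - x 0) ∧
      (∀ i j, i ≠ j → x i ≠ x j ∧ y i ≠ y j) :=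
  stmt7_general p r hr E hE
end

section
/- Let p be an odd prime, d ≥ 2, r a nonzero quadratic residue in 𝔽_p, and E ⊆ 𝔽_p^d with |E| ≥ (d+1) p^{d/2}. Then there exist (x₁, …, x_{d+1}) ∈ E^{d+1} and (y₁, …, y_{d+1}) ∈ E^{d+1} with xᵢ ≠ xⱼ and yᵢ ≠ yⱼ for i ≠ j, such that ‖yᵢ − yⱼ‖ = r‖xᵢ − xⱼ‖ for all i, j ∈ [d+1]. -/
/-!
The homothetic pairs come from a single dilation `v ↦ s • v + t` with `s ^ 2 = r`, which
multiplies every `sqnorm` of a difference by `r`. For fixed `s`, each `x ∈ E` has exactly `#E`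
translations `t` with `s • x + t ∈ E`, so summing `#{x ∈ E | s • x + t ∈ E}` over all `p ^ d`
translations gives `#E ^ 2`, which the size bound makes larger than `d * p ^ d`; hence some
translation `t` leaves at least `d + 1` points `x ∈ E` with `s • x + t ∈ E`.
-/

open Finset

namespace Finset

theorem exists_injective_fin_of_le_card {α : Type*} {S : Finset α} {n : ℕ} (h : n ≤ #S) :
    ∃ x : Fin n → α, Function.Injective x ∧ ∀ i, x i ∈ S :=
  ⟨fun i ↦ S.equivFin.symm (Fin.castLE h i),
    (Subtype.val_injective.comp S.equivFin.symm.injective).comp (Fin.castLE_injective h),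
    fun _ ↦ (S.equivFin.symm _).2⟩

variable {G : Type*} [AddGroup G] [Fintype G] [DecidableEq G]

theorem sum_card_filter_add_mem (f : G → G) (E F : Finset G) :
    ∑ t : G, #{x ∈ E | f x + t ∈ F} = #E * #F := by
  have hfiber (x : G) : ∑ t : G, (if f x + t ∈ F then 1 else 0) = #F := by
    rw [Fintype.sum_equiv (Equiv.addLeft (f x)) (fun t ↦ if f x + t ∈ F then 1 else 0)
      (fun u ↦ if u ∈ F then 1 else 0) fun _ ↦ rfl]
    simp
  simp_rw [card_filter]
  rw [sum_comm, sum_congr rfl fun x _ ↦ hfiber x, sum_const, smul_eq_mul]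

theorem exists_lt_card_filter_add_mem (f : G → G) {E F : Finset G} {n : ℕ}
    (h : n * Fintype.card G < #E * #F) : ∃ t : G, n < #{x ∈ E | f x + t ∈ F} := by
  rw [← sum_card_filter_add_mem f, mul_comm, ← smul_eq_mul, ← card_univ, ← sum_const] at h
  simpa using exists_lt_of_sum_lt h

end Finset

theorem exists_injective_tuples_sub_eq_smul_sub {K V : Type*} [Field K] [AddCommGroup V]
    [Module K V] [Fintype V] [DecidableEq V] {E : Finset V} {s : K} (hs : s ≠ 0) {n : ℕ}
    (hE : n * Fintype.card V < #E * #E) :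
    ∃ x y : Fin (n + 1) → V, Function.Injective x ∧ Function.Injective y ∧
      (∀ i, x i ∈ E) ∧ (∀ i, y i ∈ E) ∧ ∀ i j, y i - y j = s • (x i - x j) := by
  obtain ⟨t, ht⟩ := exists_lt_card_filter_add_mem (s • ·) hE
  obtain ⟨x, hx, hxS⟩ := exists_injective_fin_of_le_card ht
  have hsx : Function.Injective fun v : V ↦ s • v + t :=
    (add_left_injective t).comp (smul_right_injective V hs)
  refine ⟨x, fun i ↦ s • x i + t, hx, hsx.comp hx, fun i ↦ (mem_filter.1 (hxS i)).1,
    fun i ↦ (mem_filter.1 (hxS i)).2, fun i j ↦ ?_⟩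
  rw [smul_sub, add_sub_add_right_eq_sub]

theorem sqnorm_smul {p d : ℕ} (c : ZMod p) (v : Fin d → ZMod p) :
    sqnorm (c • v) = c ^ 2 * sqnorm v := by
  simp only [sqnorm, Pi.smul_apply, smul_eq_mul, mul_pow, mul_sum]

theorem mul_pow_lt_mul_self_of_succ_mul_rpow_le {n p N : ℕ} (hp : 0 < p)
    (h : ((n : ℝ) + 1) * (p : ℝ) ^ ((n : ℝ) / 2) ≤ N) : n * p ^ n < N * N := by
  have hpn : ((p : ℝ) ^ ((n : ℝ) / 2)) ^ 2 = (p : ℝ) ^ n := by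
    rw [← Real.rpow_natCast, ← Real.rpow_mul (Nat.cast_nonneg p)]
    norm_num
  have hsq := pow_le_pow_left₀ (by positivity) h 2
  rw [mul_pow, hpn] at hsq
  have : (0 : ℝ) < (p : ℝ) ^ n := by positivity
  exact_mod_cast (by nlinarith : (n : ℝ) * p ^ n < N * N)

theorem stmt9_general (p : ℕ) [Fact p.Prime] (d : ℕ)
    (r : ZMod p) (hr : r ≠ 0) (hsq : IsSquare r)
    (E : Finset (Fin d → ZMod p))
    (hE : ((d : ℝ) + 1) * (p : ℝ) ^ ((d : ℝ) / 2) ≤ E.card) :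
    ∃ x y : Fin (d + 1) → (Fin d → ZMod p),
      (∀ i, x i ∈ E) ∧ (∀ i, y i ∈ E) ∧
      (∀ i j, sqnorm (y i - y j) = r * sqnorm (x i - x j)) ∧
      (∀ i j, i ≠ j → x i ≠ x j ∧ y i ≠ y j) := by
  obtain ⟨s, rfl⟩ := hsq
  have hs : s ≠ 0 := by rintro rfl; simp at hr
  have hcard : d * Fintype.card (Fin d → ZMod p) < #E * #E := by
    simpa using mul_pow_lt_mul_self_of_succ_mul_rpow_le (Fact.out : p.Prime).pos hE
  obtain ⟨x, y, hx, hy, hxE, hyE, hxy⟩ := exists_injective_tuples_sub_eq_smul_sub hs hcard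
  exact ⟨x, y, hxE, hyE, fun i j ↦ by rw [hxy, sqnorm_smul, sq],
    fun i j hij ↦ ⟨hx.ne hij, hy.ne hij⟩⟩

theorem stmt9 (p : ℕ) [Fact p.Prime] (hodd : Odd p) (d : ℕ) (hd : 2 ≤ d)
    (r : ZMod p) (hr : r ≠ 0) (hsq : IsSquare r)
    (E : Finset (Fin d → ZMod p))
    (hE : ((d : ℝ) + 1) * (p : ℝ) ^ ((d : ℝ) / 2) ≤ E.card) :
    ∃ x y : Fin (d + 1) → (Fin d → ZMod p),
      (∀ i, x i ∈ E) ∧ (∀ i, y i ∈ E) ∧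
      (∀ i j, sqnorm (y i - y j) = r * sqnorm (x i - x j)) ∧
      (∀ i j, i ≠ j → x i ≠ x j ∧ y i ≠ y j) :=
  stmt9_general p d r hr hsq E hE
end

section
/- Let p ≡ 3 (mod 4) be a prime, r ∈ 𝔽_p*, k ≥ 1, and E ⊆ 𝔽_p² with |E| > 2p. Then |{(x₁,…,x_{k+1},y₁,…,y_{k+1}) ∈ E^{2k+2} : ‖yᵢ − yᵢ₊₁‖ = r‖xᵢ − xᵢ₊₁‖ and xᵢ ≠ xᵢ₊₁ for all i ∈ [k]}| > |E|^{2k+2} / (3p)^k. -/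
/-!
A pair of walks is one walk on `S = E × E ⊆ 𝔽_p² × 𝔽_p²`, so the count is `𝟙 ⬝ A^k 𝟙` for the
adjacency matrix `A` of the step relation `‖y - y'‖ = r ‖x - x'‖, x ≠ x'`. As `-1` is not a
square mod `p`, `‖·‖` is the norm of the field `𝔽_p[i]`; so a step means `y - y' = γ (x - x')`
for a unique `γ` on the circle `‖γ‖ = r`, which has `p + 1` points. Hence
`A = ∑_γ B_γ - (p + 1) I`, where `B_γ` is the matrix of the equivalence `y - γ x = y' - γ x'`,
a positive semidefinite matrix. So every eigenvalue of `A` is at least `-(p + 1)`, and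
Cauchy–Schwarz over the `p²` classes of each `B_γ` gives `𝟙 ⬝ A 𝟙 ≥ (p + 1)(|S|²/p² - |S|)`.
Since `λ^(k+1) - w^k λ + w^(k+1) ≥ 0` for `λ ≥ -w`, expanding in an eigenbasis gives
`𝟙 ⬝ A^(k+1) 𝟙 ≥ w^k (𝟙 ⬝ A 𝟙) - w^(k+1) |S|` for `w ≥ p + 1`; take `w = |S| / (3p)`.
-/

open Finset Matrix

namespace Matrix

lemma sum_mul_prod_chain {N R : Type*} [Fintype N] [DecidableEq N] [CommSemiring R]
    (A : Matrix N N R) (g : N → R) (k : ℕ) :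
    ∑ h : Fin (k + 1) → N, g (h 0) * ∏ i : Fin k, A (h i.castSucc) (h i.succ)
      = ∑ a, (g ᵥ* A ^ k) a := by
  induction k generalizing g with
  | zero =>
    simpa using Fintype.sum_equiv (Equiv.funUnique (Fin 1) N) _ g fun _ => rfl
  | succ k ih =>
    rw [← Fintype.sum_equiv (Fin.consEquiv fun _ => N) _ _ fun _ => rfl,
      Fintype.sum_prod_type, sum_comm, pow_succ', ← vecMul_vecMul, ← ih]
    refine sum_congr rfl fun t _ => ?_
    simp only [Fin.consEquiv_apply, Fin.prod_univ_succ, Fin.cons_zero, ← Fin.succ_castSucc,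
      Fin.castSucc_zero, Fin.cons_succ, vecMul, dotProduct, sum_mul, mul_assoc]

lemma card_chains_eq {N R : Type*} [Fintype N] [DecidableEq N] [CommSemiring R]
    (rel : N → N → Prop) [DecidableRel rel] (k : ℕ) :
    (Fintype.card {h : Fin (k + 1) → N // ∀ i : Fin k, rel (h i.castSucc) (h i.succ)} : R)
      = 1 ⬝ᵥ ((of fun a b => if rel a b then 1 else 0) ^ k *ᵥ 1) := by
  rw [Fintype.card_subtype, natCast_card_filter, dotProduct_mulVec, dotProduct_one,
    ← sum_mul_prod_chain]
  simp [Fintype.prod_boole]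

end Matrix

lemma pow_mul_sub_pow_succ_le_pow_succ {w m : ℝ} (hw : 0 ≤ w) (hm : -w ≤ m) (k : ℕ) :
    w ^ k * m - w ^ (k + 1) ≤ m ^ (k + 1) := by
  rcases le_or_gt 0 m with hm0 | hm0
  · rcases le_total m w with hmw | hwm
    · have : w ^ k * m ≤ w ^ (k + 1) := by
        rw [pow_succ]; exact mul_le_mul_of_nonneg_left hmw (pow_nonneg hw k)
      nlinarith [pow_nonneg hm0 (k + 1)]
    · have : w ^ k * m ≤ m ^ (k + 1) := by
        rw [pow_succ]; exact mul_le_mul_of_nonneg_right (pow_le_pow_left₀ hw hwm k) hm0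
      nlinarith [pow_nonneg hw (k + 1)]
  · have habs : |m| ^ (k + 1) ≤ w ^ (k + 1) :=
      pow_le_pow_left₀ (abs_nonneg m) (abs_le.mpr ⟨hm, by linarith⟩) _
    have hneg : -|m| ^ (k + 1) ≤ m ^ (k + 1) := abs_pow m (k + 1) ▸ neg_abs_le _
    nlinarith [pow_nonneg hw k]

lemma sum_sq_sum_fiberwise {N M R : Type*} [Fintype N] [Fintype M] [DecidableEq M]
    [CommSemiring R] (φ : N → M) (g : N → R) :
    ∑ w, (∑ v with φ v = w, g v) ^ 2 = ∑ v, ∑ v', if φ v = φ v' then g v * g v' else 0 := by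
  have hfiber (w : M) : (∑ v with φ v = w, g v) ^ 2
      = ∑ v with φ v = w, g v * ∑ v' with φ v' = φ v, g v' := by
    rw [sq, sum_mul]
    refine sum_congr rfl fun v hv => ?_
    rw [(mem_filter.mp hv).2]
  simp_rw [hfiber, sum_fiberwise, mul_sum, sum_filter]
  exact sum_congr rfl fun v _ => sum_congr rfl fun v' _ => if_congr eq_comm rfl rfl

namespace Matrix.IsHermitian

variable {N : Type*} [Fintype N] [DecidableEq N] {T : Matrix N N ℝ}

lemma dotProduct_pow_mulVec (hT : T.IsHermitian) (u : N → ℝ) (m : ℕ) :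
    u ⬝ᵥ (T ^ m *ᵥ u)
      = ∑ j, hT.eigenvalues j ^ m * (star (hT.eigenvectorUnitary : Matrix N N ℝ) *ᵥ u) j ^ 2 := by
  set U : Matrix N N ℝ := (hT.eigenvectorUnitary : Matrix N N ℝ)
  have hpow : T ^ m = U * diagonal (hT.eigenvalues ^ m) * star U := by
    conv_lhs => rw [hT.spectral_theorem]
    rw [← map_pow, diagonal_pow, Unitary.conjStarAlgAut_apply]
    rfl
  have hstar : star U = Uᵀ := by rw [star_eq_conjTranspose, conjTranspose_eq_transpose_of_trivial]
  rw [hpow, ← mulVec_mulVec, ← mulVec_mulVec, dotProduct_mulVec, ← mulVec_transpose, ← hstar,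
    dotProduct]
  simp only [mulVec_diagonal, Pi.pow_apply]
  exact sum_congr rfl fun j _ => by ring

lemma neg_le_eigenvalues {w : ℝ} (hT : T.IsHermitian)
    (hquad : ∀ g, -(w * (g ⬝ᵥ g)) ≤ g ⬝ᵥ (T *ᵥ g)) (j : N) : -w ≤ hT.eigenvalues j := by
  have h0 := hT.dotProduct_pow_mulVec (hT.eigenvectorBasis j) 0
  have h1 := hT.dotProduct_pow_mulVec (hT.eigenvectorBasis j) 1
  rw [pow_zero, one_mulVec] at h0
  rw [pow_one] at h1
  simpa [h0, h1, star_eigenvectorUnitary_mulVec, Pi.single_apply]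
    using hquad (hT.eigenvectorBasis j)

lemma le_dotProduct_pow_succ_mulVec {w : ℝ} (hT : T.IsHermitian)
    (hw : 0 ≤ w) (hlam : ∀ j, -w ≤ hT.eigenvalues j) (u : N → ℝ) (k : ℕ) :
    w ^ k * (u ⬝ᵥ (T *ᵥ u)) - w ^ (k + 1) * (u ⬝ᵥ u) ≤ u ⬝ᵥ (T ^ (k + 1) *ᵥ u) := by
  have h0 := hT.dotProduct_pow_mulVec u 0
  have h1 := hT.dotProduct_pow_mulVec u 1
  rw [pow_zero, one_mulVec] at h0
  rw [pow_one] at h1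
  rw [h0, h1, hT.dotProduct_pow_mulVec, mul_sum, mul_sum, ← sum_sub_distrib]
  refine sum_le_sum fun j _ => ?_
  have := pow_mul_sub_pow_succ_le_pow_succ hw (hlam j) k
  nlinarith [sq_nonneg ((star (hT.eigenvectorUnitary : Matrix N N ℝ) *ᵥ u) j)]

end Matrix.IsHermitian

namespace DilatedWalks

abbrev Plane (p : ℕ) := Fin 2 → ZMod p

variable {p : ℕ}

/-- Multiplication in `𝔽_p[i]`, a point `z` standing for `z 0 + z 1 * i`. -/
def cmul (γ z : Plane p) : Plane p := ![γ 0 * z 0 - γ 1 * z 1, γ 1 * z 0 + γ 0 * z 1]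

lemma sqnorm_eq (z : Plane p) : sqnorm z = z 0 ^ 2 + z 1 ^ 2 := by
  simp [sqnorm, Fin.sum_univ_two]

lemma sqnorm_cmul (γ z : Plane p) : sqnorm (cmul γ z) = sqnorm γ * sqnorm z := by
  simp only [sqnorm_eq, cmul, Matrix.cons_val_zero, Matrix.cons_val_one]; ring

lemma cmul_sub (γ z w : Plane p) : cmul γ (z - w) = cmul γ z - cmul γ w := by
  ext i; fin_cases i <;> simp [cmul] <;> ring

lemma cmul_zero (γ : Plane p) : cmul γ 0 = 0 := by
  ext i; fin_cases i <;> simp [cmul]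

lemma sqnorm_sub_comm (z w : Plane p) : sqnorm (z - w) = sqnorm (w - z) := by
  simp only [sqnorm_eq, Pi.sub_apply]; ring

variable (p) in
def circle [NeZero p] (r : ZMod p) : Finset (Plane p) := {γ | sqnorm γ = r}

lemma mem_circle [NeZero p] {r : ZMod p} {γ : Plane p} : γ ∈ circle p r ↔ sqnorm γ = r := by
  simp [circle]

variable [Fact p.Prime]

lemma two_ne_zero_of_not_isSquare (hp : ¬IsSquare (-1 : ZMod p)) : (2 : ZMod p) ≠ 0 :=
  fun h => hp ⟨1, by linear_combination -h⟩

lemma eq_zero_of_sqnorm_eq_zero (hp : ¬IsSquare (-1 : ZMod p)) {z : Plane p}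
    (hz : sqnorm z = 0) : z = 0 := by
  rw [sqnorm_eq] at hz
  have h1 : z 1 = 0 := by
    by_contra h1
    exact hp ⟨z 0 / z 1, by field_simp; linear_combination -hz⟩
  have h0 : z 0 = 0 := pow_eq_zero_iff two_ne_zero |>.mp (by simpa [h1] using hz)
  ext i; fin_cases i <;> simp [h0, h1]

lemma cmul_left_injective {z : Plane p} (hz : sqnorm z ≠ 0) :
    Function.Injective (cmul · z) := by
  intro γ δ h
  have h0 := congrFun h 0
  have h1 := congrFun h 1
  simp only [cmul, Matrix.cons_val_zero, Matrix.cons_val_one] at h0 h1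
  rw [sqnorm_eq] at hz
  ext i; fin_cases i
  · exact sub_eq_zero.mp <| (mul_eq_zero.mp (by linear_combination z 0 * h0 + z 1 * h1 :
      (γ 0 - δ 0) * (z 0 ^ 2 + z 1 ^ 2) = 0)).resolve_right hz
  · exact sub_eq_zero.mp <| (mul_eq_zero.mp (by linear_combination z 0 * h1 - z 1 * h0 :
      (γ 1 - δ 1) * (z 0 ^ 2 + z 1 ^ 2) = 0)).resolve_right hz

lemma exists_cmul_eq {z : Plane p} (hz : sqnorm z ≠ 0) (w : Plane p) :
    ∃ γ, cmul γ z = w := by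
  rw [sqnorm_eq] at hz
  refine ⟨![(w 0 * z 0 + w 1 * z 1) / (z 0 ^ 2 + z 1 ^ 2),
    (w 1 * z 0 - w 0 * z 1) / (z 0 ^ 2 + z 1 ^ 2)], ?_⟩
  ext i; fin_cases i <;> simp [cmul] <;> field_simp <;> ring

/-- Stereographic projection from `(-1, 0)`: the slope `t` of a line through `(-1, 0)` gives
its second intersection with the unit circle, and `none` stands for the tangent line. -/
noncomputable def stereo : Option (ZMod p) → Plane p
  | none => ![-1, 0]
  | some t => ![(1 - t ^ 2) / (1 + t ^ 2), 2 * t / (1 + t ^ 2)]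

noncomputable def slope (γ : Plane p) : Option (ZMod p) :=
  if γ 0 = -1 then none else some (γ 1 / (1 + γ 0))

lemma one_add_sq_ne_zero (hp : ¬IsSquare (-1 : ZMod p)) (t : ZMod p) : 1 + t ^ 2 ≠ 0 :=
  fun h => hp ⟨t, by linear_combination -h⟩

lemma stereo_mem_circle (hp : ¬IsSquare (-1 : ZMod p)) (t : Option (ZMod p)) :
    stereo t ∈ circle p 1 := by
  rcases t with _ | t
  · simp [mem_circle, sqnorm_eq, stereo]
  · have := one_add_sq_ne_zero hp t
    simp only [mem_circle, sqnorm_eq, stereo, Matrix.cons_val_zero, Matrix.cons_val_one]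
    field_simp
    ring

lemma slope_stereo (hp : ¬IsSquare (-1 : ZMod p)) (t : Option (ZMod p)) :
    slope (stereo t) = t := by
  rcases t with _ | t
  · simp [stereo, slope]
  · have h2 := two_ne_zero_of_not_isSquare hp
    have hden := one_add_sq_ne_zero hp t
    have hx : (1 - t ^ 2) / (1 + t ^ 2) ≠ -1 := by
      rw [Ne, div_eq_iff hden]
      exact fun h => h2 (by linear_combination h)
    simp only [stereo, slope, Matrix.cons_val_zero, Matrix.cons_val_one, hx, if_false]
    rw [show 1 + (1 - t ^ 2) / (1 + t ^ 2) = 2 / (1 + t ^ 2) by field_simp; ring]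
    field_simp

lemma stereo_slope (hp : ¬IsSquare (-1 : ZMod p)) {γ : Plane p} (hγ : γ ∈ circle p 1) :
    stereo (slope γ) = γ := by
  rw [mem_circle, sqnorm_eq] at hγ
  by_cases hx : γ 0 = -1
  · have hy : γ 1 = 0 :=
      pow_eq_zero_iff two_ne_zero |>.mp (by rw [hx] at hγ; linear_combination hγ)
    ext i; fin_cases i <;> simp [stereo, slope, hx, hy]
  · have h1x : 1 + γ 0 ≠ 0 := fun h => hx (by linear_combination h)
    have := one_add_sq_ne_zero hp (γ 1 / (1 + γ 0))
    have : (1 + γ 0) ^ 2 + γ 1 ^ 2 ≠ 0 := by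
      rw [show (1 + γ 0) ^ 2 + γ 1 ^ 2 = 2 * (1 + γ 0) by linear_combination hγ]
      exact mul_ne_zero (two_ne_zero_of_not_isSquare hp) h1x
    ext i; fin_cases i <;> simp [stereo, slope, hx] <;> field_simp
    · linear_combination (-(1 + γ 0)) * hγ
    · linear_combination (-(γ 1 * (1 + γ 0)) + γ 1 * γ 0) * hγ

lemma card_circle_one (hp : ¬IsSquare (-1 : ZMod p)) : #(circle p 1) = p + 1 := by
  have hcard : #(univ : Finset (Option (ZMod p))) = p + 1 := by simp [ZMod.card]
  rw [← hcard]
  exact (card_nbij' stereo slope (fun t _ => stereo_mem_circle hp t) (fun _ _ => mem_univ _)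
    (fun t _ => slope_stereo hp t) (fun _ hγ => stereo_slope hp hγ)).symm

lemma card_circle (hp : ¬IsSquare (-1 : ZMod p)) {r : ZMod p} (hr : r ≠ 0) :
    #(circle p r) = p + 1 := by
  obtain ⟨a, b, hab⟩ := ZMod.sq_add_sq p r
  set γ₀ : Plane p := ![a, b]
  have hγ₀ : sqnorm γ₀ = r := by simpa [sqnorm_eq, γ₀] using hab
  have himage : (circle p 1).image (cmul · γ₀) = circle p r := by
    ext w
    simp only [mem_image, mem_circle]
    constructor
    · rintro ⟨δ, hδ, rfl⟩
      rw [sqnorm_cmul, hδ, hγ₀, one_mul]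
    · intro hw
      obtain ⟨δ, rfl⟩ := exists_cmul_eq (hγ₀ ▸ hr) w
      rw [sqnorm_cmul, hγ₀] at hw
      exact ⟨δ, (mul_eq_right₀ hr).mp hw, rfl⟩
  rw [← himage, card_image_of_injective _ (cmul_left_injective (hγ₀ ▸ hr)), card_circle_one hp]

lemma card_filter_circle_cmul_eq (hp : ¬IsSquare (-1 : ZMod p)) {r : ZMod p} {z : Plane p}
    (hz : z ≠ 0) (w : Plane p) :
    #{γ ∈ circle p r | cmul γ z = w} = if sqnorm w = r * sqnorm z then 1 else 0 := by
  have hz' : sqnorm z ≠ 0 := fun h => hz (eq_zero_of_sqnorm_eq_zero hp h)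
  obtain ⟨γ, rfl⟩ := exists_cmul_eq hz' w
  simp_rw [(cmul_left_injective hz').eq_iff, filter_eq', sqnorm_cmul, mul_left_inj' hz',
    ← mem_circle, apply_ite card, card_singleton, card_empty]

/-- A vertex `v = (x, y)` pairs a point `x` of the first walk with a point `y` of the second. -/
def IsDilatedStep (r : ZMod p) (v v' : Plane p × Plane p) : Prop :=
  sqnorm (v.2 - v'.2) = r * sqnorm (v.1 - v'.1) ∧ v.1 ≠ v'.1

instance (r : ZMod p) : DecidableRel (IsDilatedStep r) :=
  fun _ _ => inferInstanceAs (Decidable (_ ∧ _))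

lemma isDilatedStep_comm {r : ZMod p} {v v' : Plane p × Plane p} :
    IsDilatedStep r v v' ↔ IsDilatedStep r v' v := by
  rw [IsDilatedStep, IsDilatedStep, sqnorm_sub_comm v.1, sqnorm_sub_comm v.2, ne_comm]

/-- For `x ≠ x'` exactly one `γ` on the circle gives `y - y' = γ (x - x')`, and only when the
norms match; for `x = x'` all `p + 1` of them do as soon as `y = y'`. -/
lemma indicator_isDilatedStep (hp : ¬IsSquare (-1 : ZMod p)) {r : ZMod p} (hr : r ≠ 0)
    (v v' : Plane p × Plane p) :
    (if IsDilatedStep r v v' then 1 else 0 : ℝ)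
      = #{γ ∈ circle p r | cmul γ (v.1 - v'.1) = v.2 - v'.2}
        - ((p : ℝ) + 1) * if v = v' then 1 else 0 := by
  by_cases hx : v.1 = v'.1
  · have hv : v = v' ↔ v.2 - v'.2 = 0 := by rw [sub_eq_zero, Prod.ext_iff]; simp [hx]
    simp only [IsDilatedStep, hx, sub_self, cmul_zero, ne_eq, not_true, and_false, if_false,
      hv, eq_comm (a := (0 : Plane p))]
    split_ifs with h <;> simp [h, card_circle hp hr]
  · rw [card_filter_circle_cmul_eq hp (sub_ne_zero.mpr hx),
      if_neg (fun h => hx (congrArg Prod.fst h))]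
    simp [IsDilatedStep, hx]

variable (S : Finset (Plane p × Plane p)) (r : ZMod p)

def dilationMatrix : Matrix S S ℝ := Matrix.of fun v v' => if IsDilatedStep r v v' then 1 else 0

lemma dilationMatrix_isHermitian : (dilationMatrix S r).IsHermitian := by
  ext v v'
  simp [dilationMatrix, isDilatedStep_comm]

variable {S r}

lemma dotProduct_dilationMatrix_mulVec (hp : ¬IsSquare (-1 : ZMod p)) (hr : r ≠ 0)
    (g : S → ℝ) :
    g ⬝ᵥ (dilationMatrix S r *ᵥ g)
      = ∑ γ ∈ circle p r, ∑ w, (∑ v : S with v.1.2 - cmul γ v.1.1 = w, g v) ^ 2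
        - ((p : ℝ) + 1) * (g ⬝ᵥ g) := by
  have hstep (v v' : S) : g v * (dilationMatrix S r v v' * g v')
      = ∑ γ ∈ circle p r, (if v.1.2 - cmul γ v.1.1 = v'.1.2 - cmul γ v'.1.1
          then g v * g v' else 0)
        - ((p : ℝ) + 1) * if v = v' then g v * g v' else 0 := by
    have hiff (γ : Plane p) : v.1.2 - cmul γ v.1.1 = v'.1.2 - cmul γ v'.1.1
        ↔ cmul γ (v.1.1 - v'.1.1) = v.1.2 - v'.1.2 := by
      rw [cmul_sub, sub_eq_sub_iff_sub_eq_sub, eq_comm]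
    rw [dilationMatrix, of_apply, mul_left_comm, ← mul_assoc, mul_assoc,
      indicator_isDilatedStep hp hr, sub_mul, natCast_card_filter, sum_mul, mul_assoc, boole_mul]
    simp only [boole_mul, hiff, Subtype.ext_iff]
  simp only [dotProduct, mulVec, mul_sum, hstep, sum_sub_distrib, sum_sq_sum_fiberwise]
  congr 1
  · simp_rw [sum_comm (γ := Plane p)]
  · simp [← mul_sum]

lemma neg_le_dotProduct_dilationMatrix_mulVec (hp : ¬IsSquare (-1 : ZMod p)) (hr : r ≠ 0)
    (g : S → ℝ) : -(((p : ℝ) + 1) * (g ⬝ᵥ g)) ≤ g ⬝ᵥ (dilationMatrix S r *ᵥ g) := by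
  rw [dotProduct_dilationMatrix_mulVec hp hr]
  have : 0 ≤ ∑ γ ∈ circle p r, ∑ w, (∑ v : S with v.1.2 - cmul γ v.1.1 = w, g v) ^ 2 := by
    positivity
  linarith

lemma le_one_dotProduct_dilationMatrix_mulVec_one (hp : ¬IsSquare (-1 : ZMod p))
    (hr : r ≠ 0) :
    ((p : ℝ) + 1) * ((#S : ℝ) ^ 2 / (p : ℝ) ^ 2 - #S)
      ≤ 1 ⬝ᵥ (dilationMatrix S r *ᵥ 1) := by
  have hfiber (γ : Plane p) : (#S : ℝ) ^ 2 / (p : ℝ) ^ 2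
      ≤ ∑ w, (∑ v : S with v.1.2 - cmul γ v.1.1 = w, (1 : S → ℝ) v) ^ 2 := by
    have hcs := sq_sum_le_card_mul_sum_sq (s := univ)
      (f := fun w : Plane p => ∑ v : S with v.1.2 - cmul γ v.1.1 = w, (1 : S → ℝ) v)
    simp only [sum_fiberwise, card_univ, Fintype.card_pi, ZMod.card, prod_const,
      Fintype.card_fin] at hcs
    rw [div_le_iff₀ (by have := (Fact.out : p.Prime).pos; positivity)]
    simpa [mul_comm] using hcs
  rw [dotProduct_dilationMatrix_mulVec hp hr, one_dotProduct_one, Fintype.card_coe]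
  have := sum_le_sum fun γ (_ : γ ∈ circle p r) => hfiber γ
  rw [sum_const, card_circle hp hr, nsmul_eq_mul] at this
  push_cast at this
  linarith

lemma lt_one_dotProduct_dilationMatrix_pow_mulVec_one (hp : ¬IsSquare (-1 : ZMod p))
    (hr : r ≠ 0) (hS : 4 * p ^ 2 < #S) (k : ℕ) :
    ((#S : ℝ) / (3 * p)) ^ (k + 1) * #S < 1 ⬝ᵥ (dilationMatrix S r ^ (k + 1) *ᵥ 1) := by
  have hp3 : 3 ≤ p := by
    have : p ≠ 2 := by rintro rfl; exact two_ne_zero_of_not_isSquare hp rfl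
    have := (Fact.out : p.Prime).two_le
    omega
  have hP : (3 : ℝ) ≤ p := by exact_mod_cast hp3
  have hN : 4 * (p : ℝ) ^ 2 < #S := by exact_mod_cast hS
  set w : ℝ := #S / (3 * p)
  have hw : (p : ℝ) + 1 ≤ w := by rw [le_div_iff₀ (by positivity)]; nlinarith
  have hT := dilationMatrix_isHermitian S r
  have hlam (j : S) : -w ≤ hT.eigenvalues j := by
    have := hT.neg_le_eigenvalues (neg_le_dotProduct_dilationMatrix_mulVec hp hr) j
    linarith
  have hspec := hT.le_dotProduct_pow_succ_mulVec (by positivity) hlam 1 k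
  have hone := le_one_dotProduct_dilationMatrix_mulVec_one (S := S) hp hr
  rw [one_dotProduct_one, Fintype.card_coe] at hspec
  have hkey : 2 * w * #S < 1 ⬝ᵥ (dilationMatrix S r *ᵥ 1) := by
    refine lt_of_lt_of_le ?_ hone
    have hP0 : (0 : ℝ) < p := by linarith
    have hN0 : (0 : ℝ) < #S := by nlinarith
    have key : 2 * #S * (p : ℝ) < 3 * (p + 1) * (#S - p ^ 2) := by nlinarith
    rw [show 2 * w * #S = 2 * #S * (p : ℝ) * #S / (3 * p ^ 2) by unfold w; field_simp,
      show ((p : ℝ) + 1) * ((#S : ℝ) ^ 2 / p ^ 2 - #S)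
        = 3 * (p + 1) * (#S - p ^ 2) * #S / (3 * p ^ 2) by field_simp]
    gcongr
  have hwk : 0 < w ^ k := pow_pos (by linarith) k
  rw [pow_succ] at hspec ⊢
  nlinarith [mul_lt_mul_of_pos_left hkey hwk]

variable (r) in
lemma natCard_dilatedWalks_eq (E : Finset (Plane p)) (k : ℕ) :
    Nat.card {xy : (Fin (k + 1) → Plane p) × (Fin (k + 1) → Plane p) |
        (∀ i, xy.1 i ∈ E) ∧ (∀ i, xy.2 i ∈ E) ∧
        ∀ i : Fin k, sqnorm (xy.2 i.castSucc - xy.2 i.succ)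
          = r * sqnorm (xy.1 i.castSucc - xy.1 i.succ) ∧ xy.1 i.castSucc ≠ xy.1 i.succ}
      = Fintype.card {h : Fin (k + 1) → E ×ˢ E //
          ∀ i : Fin k, IsDilatedStep r (h i.castSucc) (h i.succ)} := by
  rw [← Nat.card_eq_fintype_card]
  exact Nat.card_congr
    { toFun := fun xy => ⟨fun i => ⟨(xy.1.1 i, xy.1.2 i), mem_product.mpr ⟨xy.2.1 i, xy.2.2.1 i⟩⟩,
        xy.2.2.2⟩
      invFun := fun h => ⟨(fun i => (h.1 i).1.1, fun i => (h.1 i).1.2),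
        fun i => (mem_product.mp (h.1 i).2).1, fun i => (mem_product.mp (h.1 i).2).2, h.2⟩
      left_inv := fun _ => rfl
      right_inv := fun _ => rfl }

end DilatedWalks

open DilatedWalks in
theorem stmt10 (p : ℕ) [Fact p.Prime] (hp4 : p % 4 = 3)
    (r : ZMod p) (hr : r ≠ 0) (k : ℕ) (hk : 1 ≤ k)
    (E : Finset (Fin 2 → ZMod p)) (hE : 2 * p < E.card) :
    ((E.card : ℝ)) ^ (2 * k + 2) / (3 * (p : ℝ)) ^ k
      < (Nat.card {xy : (Fin (k + 1) → (Fin 2 → ZMod p)) × (Fin (k + 1) → (Fin 2 → ZMod p)) |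
          (∀ i, xy.1 i ∈ E) ∧ (∀ i, xy.2 i ∈ E) ∧
          (∀ i : Fin k, sqnorm (xy.2 i.castSucc - xy.2 i.succ) = r * sqnorm (xy.1 i.castSucc - xy.1 i.succ) ∧
            xy.1 i.castSucc ≠ xy.1 i.succ)} : ℝ) := by
  have hp : ¬IsSquare (-1 : ZMod p) := by rw [ZMod.exists_sq_eq_neg_one_iff]; simp [hp4]
  obtain ⟨k, rfl⟩ : ∃ k', k = k' + 1 := ⟨k - 1, by omega⟩
  have hS : #(E ×ˢ E) = #E ^ 2 := by rw [card_product, sq]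
  have hsize : 4 * p ^ 2 < #(E ×ˢ E) := by rw [hS]; nlinarith
  rw [natCard_dilatedWalks_eq r E, card_chains_eq fun a b : E ×ˢ E => IsDilatedStep r a b]
  convert lt_one_dotProduct_dilationMatrix_pow_mulVec_one hp hr hsize k using 1
  · rw [hS, Nat.cast_pow, div_pow, ← pow_mul]
    ring
  · rfl
end

section
/- Let p be an odd prime, r a nonzero quadratic residue in 𝔽_p with square root √r, θ ∈ O_d(𝔽_p), and E ⊆ 𝔽_p^d. With λ_{r,θ}(z) = |{(u,v) ∈ E² : u − √r θ v = z}|, for any fixed k < l in [d+1] we have |{(u₁,…,u_{d+1},v₁,…,v_{d+1}) ∈ E^{2d+2} : uᵢ − uⱼ = √r θ(vᵢ − vⱼ) for all 1 ≤ i < j ≤ d+1, and v_k = v_l}| = ∑_{z ∈ 𝔽_p^d} λ_{r,θ}(z)^d. -/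
/-!
The relations `uᵢ - uⱼ = √r θ (vᵢ - vⱼ)` say exactly that `uᵢ - √r θ vᵢ` is a constant `z`, so a
solution is a `(d+1)`-tuple of pairs from the fibre `{(u, v) ∈ E² : u - √r θ v = z}`. Within one
fibre, `v_k = v_l` forces `u_k = u_l`, so the pair at `l` repeats the pair at `k` and the other `d`
pairs are free, giving `λ_{r,θ}(z)^d` solutions over `z`.
-/

open Matrix

theorem Nat.card_subtype_apply_eq_apply {ι β : Type*} [Fintype ι] [DecidableEq ι] {k l : ι}
    (hkl : k ≠ l) :
    Nat.card {x : ι → β // x k = x l} = Nat.card β ^ (Fintype.card ι - 1) := by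
  have e : {x : ι → β // x k = x l} ≃ ({j // j ≠ l} → β) :=
    { toFun := fun x j => x.1 j
      invFun := fun y => ⟨fun j => if h : j = l then y ⟨k, hkl⟩ else y ⟨j, h⟩, by simp [hkl]⟩
      left_inv := fun x => by
        ext j
        by_cases h : j = l
        · subst h; simp [x.2]
        · simp [h]
      right_inv := fun y => by
        ext j
        simp [j.2] }
  rw [Nat.card_congr e, Nat.card_fun]
  simp [Nat.card_eq_fintype_card]

theorem Nat.card_subtype_eq_sum_card_fiber {X γ : Type*} [Finite X] [Fintype γ] (f : X → γ)
    (p : X → Prop) : Nat.card {x // p x} = ∑ z, Nat.card {x // p x ∧ f x = z} := by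
  rw [← Nat.card_sigma]
  exact Nat.card_congr <| (Equiv.sigmaFiberEquiv fun x : {x // p x} => f x).symm.trans <|
    Equiv.sigmaCongrRight fun z => Equiv.subtypeSubtypeEquivSubtypeInter p (f · = z)

theorem Nat.card_subtype_mem_comp_const_apply_eq_apply {ι α γ : Type*} [Fintype ι] [DecidableEq ι]
    [Finite α] [Fintype γ] (g : α → γ) (S : Set α) {k l : ι} (hkl : k ≠ l) :
    Nat.card {x : ι → α // (∀ i, x i ∈ S) ∧ (∀ i j, g (x i) = g (x j)) ∧ x k = x l}
      = ∑ z, Nat.card {a // a ∈ S ∧ g a = z} ^ (Fintype.card ι - 1) := by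
  rw [Nat.card_subtype_eq_sum_card_fiber fun x => g (x k)]
  refine Finset.sum_congr rfl fun z _ => ?_
  calc _ = Nat.card {x : {x : ι → α // ∀ i, x i ∈ S ∧ g (x i) = z} // x.1 k = x.1 l} := by
        refine Nat.card_congr ((Equiv.subtypeEquivRight fun x => ?_).trans
          (Equiv.subtypeSubtypeEquivSubtypeInter _ (fun x : ι → α => x k = x l)).symm)
        constructor
        · rintro ⟨⟨hS, hg, hx⟩, rfl⟩
          exact ⟨fun i => ⟨hS i, hg i k⟩, hx⟩
        · rintro ⟨h, hx⟩
          exact ⟨⟨fun i => (h i).1, fun i j => (h i).2.trans (h j).2.symm, hx⟩, (h k).2⟩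
    _ = Nat.card {y : ι → {a // a ∈ S ∧ g a = z} // y k = y l} :=
        Nat.card_congr <| (Equiv.subtypePiEquivPi (p := fun _ a => a ∈ S ∧ g a = z)).subtypeEquiv
          fun _ => by rw [Subtype.ext_iff]; rfl
    _ = _ := Nat.card_subtype_apply_eq_apply hkl

section AdditiveGroups

variable {ι A B : Type*} [LinearOrder ι] [AddCommGroup A] [AddCommGroup B]

theorem forall_lt_sub_eq_map_sub_iff (φ : A →+ B) (u : ι → B) (v : ι → A) :
    (∀ i j, i < j → u i - u j = φ (v i - v j)) ↔ ∀ i j, u i - φ (v i) = u j - φ (v j) := by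
  simp only [map_sub, sub_eq_sub_iff_sub_eq_sub]
  refine ⟨fun h i j => ?_, fun h i j _ => h i j⟩
  rcases lt_trichotomy i j with hij | rfl | hij
  · exact h i j hij
  · rfl
  · exact (h j i hij).symm

theorem card_sub_eq_map_sub_apply_eq_apply [Fintype ι] [Finite A] [Fintype B] (φ : A →+ B)
    (U : Set B) (V : Set A) {k l : ι} (hkl : k ≠ l) :
    Nat.card {uv : (ι → B) × (ι → A) | (∀ i, uv.1 i ∈ U) ∧ (∀ i, uv.2 i ∈ V) ∧
        (∀ i j, i < j → uv.1 i - uv.1 j = φ (uv.2 i - uv.2 j)) ∧ uv.2 k = uv.2 l}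
      = ∑ z, Nat.card {uv : B × A | uv.1 ∈ U ∧ uv.2 ∈ V ∧ uv.1 - φ uv.2 = z}
          ^ (Fintype.card ι - 1) := by
  let g : B × A → B := fun w => w.1 - φ w.2
  calc _ = Nat.card {x : ι → B × A //
        (∀ i, x i ∈ U ×ˢ V) ∧ (∀ i j, g (x i) = g (x j)) ∧ x k = x l} := by
        refine Nat.card_congr ((Equiv.arrowProdEquivProdArrow _ _ _).symm.subtypeEquiv
          fun ⟨u, v⟩ => ?_)
        simp only [Set.mem_ofPred_eq, Set.mem_prod, forall_and, Prod.mk.injEq, g,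
          forall_lt_sub_eq_map_sub_iff, Equiv.arrowProdEquivProdArrow, Equiv.coe_fn_symm_mk]
        refine ⟨fun ⟨hu, hv, hc, hvkl⟩ => ⟨⟨hu, hv⟩, hc, ?_, hvkl⟩,
          fun ⟨⟨hu, hv⟩, hc, _, hvkl⟩ => ⟨hu, hv, hc, hvkl⟩⟩
        simpa [hvkl] using hc k l
    _ = _ := by
        rw [Nat.card_subtype_mem_comp_const_apply_eq_apply g _ hkl]
        simp only [Set.mem_prod, and_assoc, g]
        rfl

end AdditiveGroups

theorem stmt13_general (p d : ℕ) [Fact p.Prime]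
    (s : ZMod p)
    (θ : Matrix (Fin d) (Fin d) (ZMod p))
    (E : Finset (Fin d → ZMod p)) (k l : Fin (d + 1)) (hkl : k < l) :
    Nat.card {uv : (Fin (d + 1) → (Fin d → ZMod p)) × (Fin (d + 1) → (Fin d → ZMod p)) |
        (∀ i, uv.1 i ∈ E) ∧ (∀ i, uv.2 i ∈ E) ∧
        (∀ i j : Fin (d + 1), i < j → uv.1 i - uv.1 j = s • θ.mulVec (uv.2 i - uv.2 j)) ∧
        uv.2 k = uv.2 l}
      = ∑ z : Fin d → ZMod p,
          (Nat.card {uv : (Fin d → ZMod p) × (Fin d → ZMod p) |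
            uv.1 ∈ E ∧ uv.2 ∈ E ∧ uv.1 - s • θ.mulVec uv.2 = z}) ^ d := by
  simpa using card_sub_eq_map_sub_apply_eq_apply (s • θ.mulVecLin).toAddMonoidHom E E hkl.ne

theorem stmt13 (p d : ℕ) [Fact p.Prime] (hodd : Odd p)
    (r s : ZMod p) (hr : r ≠ 0) (hs : s ^ 2 = r)
    (θ : Matrix (Fin d) (Fin d) (ZMod p)) (hθ : θᵀ * θ = 1)
    (E : Finset (Fin d → ZMod p)) (k l : Fin (d + 1)) (hkl : k < l) :
    Nat.card {uv : (Fin (d + 1) → (Fin d → ZMod p)) × (Fin (d + 1) → (Fin d → ZMod p)) |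
        (∀ i, uv.1 i ∈ E) ∧ (∀ i, uv.2 i ∈ E) ∧
        (∀ i j : Fin (d + 1), i < j → uv.1 i - uv.1 j = s • θ.mulVec (uv.2 i - uv.2 j)) ∧
        uv.2 k = uv.2 l}
      = ∑ z : Fin d → ZMod p,
          (Nat.card {uv : (Fin d → ZMod p) × (Fin d → ZMod p) |
            uv.1 ∈ E ∧ uv.2 ∈ E ∧ uv.1 - s • θ.mulVec uv.2 = z}) ^ d :=
  stmt13_general p d s θ E k l hkl
end

section
/- Let p ≡ 3 (mod 4) be a prime, r ∈ 𝔽_p*, and E ⊆ 𝔽_p² with |E| > 2p. Define S₁(r) = {(x₁,x₂,y₁,y₂) ∈ E⁴ : ‖y₁−y₂‖ = r‖x₁−x₂‖, x₁ ≠ x₂}. Then |S₁(r)| > |E|⁴ / (3p). -/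
open Finset

lemma AddChar.map_sum_eq_prod {A M ι : Type*} [AddCommMonoid A] [CommMonoid M]
    (ψ : AddChar A M) (s : Finset ι) (f : ι → A) : ψ (∑ i ∈ s, f i) = ∏ i ∈ s, ψ (f i) := by
  induction s using Finset.cons_induction with
  | empty => simp
  | cons a s _ ih => rw [sum_cons, prod_cons, AddChar.map_add_eq_mul, ih]

theorem four_ne_zero_of_ringChar_ne_two {R : Type*} [Ring R] [Nontrivial R] [NoZeroDivisors R]
    (hR : ringChar R ≠ 2) : (4 : R) ≠ 0 := by
  rw [show (4 : R) = 2 * 2 by norm_num]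
  exact mul_ne_zero (Ring.two_ne_zero hR) (Ring.two_ne_zero hR)

theorem dotProduct_self_eq_zero_iff_of_not_isSquare {K : Type*} [Field K] (h : ¬IsSquare (-1 : K))
    {v : Fin 2 → K} : v ⬝ᵥ v = 0 ↔ v = 0 := by
  refine ⟨fun hv => ?_, fun hv => by rw [hv, dotProduct_zero]⟩
  rw [dotProduct, Fin.sum_univ_two] at hv
  have h1 : v 1 = 0 := by
    by_contra h1
    exact h ⟨v 0 / v 1, by field_simp; linear_combination -hv⟩
  have h0 : v 0 = 0 := by simpa [h1] using hv
  ext i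
  fin_cases i <;> assumption

variable {F : Type*} [Field F] [Fintype F]

noncomputable def quadGaussSum (ψ : AddChar F ℂ) (c : F) : ℂ := ∑ u, ψ (c * u ^ 2)

section Characters

variable {ψ : AddChar F ℂ}

theorem sum_mul_sq_add_mul (hF : ringChar F ≠ 2) {c : F} (hc : c ≠ 0) (b : F) :
    ∑ u, ψ (c * u ^ 2 + b * u) = ψ (-b ^ 2 / (4 * c)) * quadGaussSum ψ c := by
  have h2 : (2 : F) ≠ 0 := Ring.two_ne_zero hF
  have h4 := four_ne_zero_of_ringChar_ne_two hF
  rw [quadGaussSum, mul_sum]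
  refine Fintype.sum_equiv (Equiv.addRight (b / (2 * c))) _ _ fun u => ?_
  rw [← AddChar.map_add_eq_mul, Equiv.coe_addRight]
  congr 1
  field_simp
  ring

theorem sum_mul_dotProduct_self_add_dotProduct {ι : Type*} [Fintype ι] [DecidableEq ι]
    (hF : ringChar F ≠ 2) {c : F} (hc : c ≠ 0) (v : ι → F) :
    ∑ ξ : ι → F, ψ (c * (ξ ⬝ᵥ ξ) + ξ ⬝ᵥ v)
      = ψ (-(v ⬝ᵥ v) / (4 * c)) * quadGaussSum ψ c ^ Fintype.card ι := by
  have hsplit (ξ : ι → F) : c * (ξ ⬝ᵥ ξ) + ξ ⬝ᵥ v = ∑ i, (c * ξ i ^ 2 + v i * ξ i) := by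
    simp only [dotProduct, mul_sum, ← sum_add_distrib, sq, mul_comm (v _)]
  have hnorm : -(v ⬝ᵥ v) / (4 * c) = ∑ i, -v i ^ 2 / (4 * c) := by
    simp only [dotProduct, ← sum_div, ← sum_neg_distrib, sq]
  simp only [hsplit, AddChar.map_sum_eq_prod]
  rw [← Fintype.prod_sum (fun i u => ψ (c * u ^ 2 + v i * u))]
  simp only [sum_mul_sq_add_mul hF hc, hnorm, AddChar.map_sum_eq_prod, prod_mul_distrib,
    prod_const, card_univ]

variable [DecidableEq F]

theorem sum_dotProduct_eq_ite {ι : Type*} [Fintype ι] [DecidableEq ι] (hψ : ψ.IsPrimitive)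
    (v : ι → F) :
    ∑ ξ : ι → F, ψ (ξ ⬝ᵥ v) = if v = 0 then (Fintype.card F : ℂ) ^ Fintype.card ι else 0 := by
  simp only [dotProduct, AddChar.map_sum_eq_prod]
  rw [← Fintype.prod_sum (fun i u => ψ (u * v i))]
  simp only [AddChar.sum_mulShift _ hψ, Nat.cast_ite, Nat.cast_zero, Fintype.prod_ite_zero,
    prod_const, card_univ, ← funext_iff]
  rfl

theorem sum_erase_zero_inv_mul (hψ : ψ.IsPrimitive) (a : F) :
    ∑ s ∈ univ.erase 0, ψ (s⁻¹ * a) = (if a = 0 then (Fintype.card F : ℂ) else 0) - 1 := by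
  calc ∑ s ∈ univ.erase 0, ψ (s⁻¹ * a) = ∑ s, ψ (s⁻¹ * a) - ψ (0⁻¹ * a) := by
        rw [← sum_erase_add _ _ (mem_univ 0), add_sub_cancel_right]
    _ = ∑ s, ψ (s * a) - 1 := by
        rw [inv_zero, zero_mul, AddChar.map_zero_eq_one,
          Fintype.sum_equiv (Equiv.inv F) (fun s => ψ (s⁻¹ * a)) (fun s => ψ (s * a)) fun s => rfl]
    _ = _ := by rw [AddChar.sum_mulShift a hψ, Nat.cast_ite, Nat.cast_zero]

theorem quadGaussSum_eq_gaussSum (hF : ringChar F ≠ 2) (hψ : ψ.IsPrimitive) {c : F}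
    (hc : c ≠ 0) :
    quadGaussSum ψ c
      = gaussSum ((quadraticChar F).ringHomComp (Int.castRingHom ℂ)) (ψ.mulShift c) := by
  have hfiber (t : F) : (#{u : F | u ^ 2 = t} : ℂ) = quadraticChar F t + 1 := by
    have := quadraticChar_card_sqrts hF t
    rw [Set.toFinset_ofPred] at this
    exact_mod_cast this
  have hzero : ∑ t : F, ψ (c * t) = 0 := by
    simpa [hc, mul_comm c] using AddChar.sum_mulShift c hψ
  calc quadGaussSum ψ c = ∑ t : F, (#{u : F | u ^ 2 = t} : ℂ) * ψ (c * t) := by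
        rw [quadGaussSum, ← sum_fiberwise univ (fun u : F => u ^ 2)]
        refine sum_congr rfl fun t _ => ?_
        rw [sum_congr rfl fun u hu => by rw [(mem_filter.mp hu).2], sum_const, nsmul_eq_mul]
    _ = ∑ t : F, (quadraticChar F t : ℂ) * ψ (c * t) + ∑ t : F, ψ (c * t) := by
        simp only [hfiber, add_mul, one_mul, sum_add_distrib]
    _ = _ := by rw [hzero, add_zero]; rfl

theorem quadGaussSum_sq (hF : ringChar F ≠ 2) (hψ : ψ.IsPrimitive) {c : F} (hc : c ≠ 0) :
    quadGaussSum ψ c ^ 2 = quadraticChar F (-1) * Fintype.card F := by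
  set χ := (quadraticChar F).ringHomComp (Int.castRingHom ℂ)
  have hχ : χ.IsQuadratic := (quadraticChar_isQuadratic F).comp _
  have hχc : χ c ^ 2 = 1 := by
    simp only [χ, MulChar.ringHomComp_apply, eq_intCast, ← Int.cast_pow, quadraticChar_sq_one hc,
      Int.cast_one]
  have hshift := gaussSum_mulShift χ ψ (Units.mk0 c hc)
  rw [Units.val_mk0] at hshift
  rw [quadGaussSum_eq_gaussSum hF hψ hc, ← one_mul (gaussSum _ _ ^ 2), ← hχc, ← mul_pow, hshift,
    gaussSum_sq ((MulChar.ringHomComp_ne_one_iff (RingHom.injective_int _)).mpr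
      (quadraticChar_ne_one hF)) hχ hψ]
  rfl

end Characters

section Fourier

variable {ι : Type*} [Fintype ι] (ψ : AddChar F ℂ) (E : Finset (ι → F))

noncomputable def indicatorFourier (ξ : ι → F) : ℂ := ∑ y ∈ E, ψ (ξ ⬝ᵥ y)

noncomputable def pairDistSum (s : F) : ℂ :=
  ∑ y ∈ E ×ˢ E, ψ (s * ((y.1 - y.2) ⬝ᵥ (y.1 - y.2)))

variable {ψ E}

theorem normSq_indicatorFourier (ξ : ι → F) :
    (Complex.normSq (indicatorFourier ψ E ξ) : ℂ) = ∑ y ∈ E ×ˢ E, ψ (ξ ⬝ᵥ (y.1 - y.2)) := by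
  rw [← Complex.mul_conj, indicatorFourier, map_sum, sum_mul_sum, sum_product]
  simp only [← AddChar.map_neg_eq_conj, ← AddChar.map_add_eq_mul, sub_eq_add_neg, dotProduct_add,
    dotProduct_neg]

omit [Fintype F] in
theorem pairDistSum_zero : pairDistSum ψ E 0 = (#E : ℂ) ^ 2 := by
  simp [pairDistSum, sq]

theorem sum_mul_normSq_indicatorFourier [DecidableEq ι] (hF : ringChar F ≠ 2) {s : F}
    (hs : s ≠ 0) :
    ∑ ξ, ψ (-(ξ ⬝ᵥ ξ) / (4 * s)) * Complex.normSq (indicatorFourier ψ E ξ)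
      = quadGaussSum ψ (-(4 * s)⁻¹) ^ Fintype.card ι * pairDistSum ψ E s := by
  have h4 := four_ne_zero_of_ringChar_ne_two hF
  have hc : -(4 * s)⁻¹ ≠ 0 := by simp [h4, hs]
  simp only [normSq_indicatorFourier, mul_sum, ← AddChar.map_add_eq_mul]
  rw [sum_comm, pairDistSum, mul_sum]
  refine sum_congr rfl fun y _ => ?_
  have hexp : -((y.1 - y.2) ⬝ᵥ (y.1 - y.2)) / (4 * -(4 * s)⁻¹)
      = s * ((y.1 - y.2) ⬝ᵥ (y.1 - y.2)) := by
    field_simp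
  rw [mul_comm (quadGaussSum _ _ ^ _), ← hexp, ← sum_mul_dotProduct_self_add_dotProduct hF hc]
  refine sum_congr rfl fun ξ _ => ?_
  rw [neg_div, div_eq_inv_mul, neg_mul_eq_neg_mul]

theorem sum_normSq_indicatorFourier [DecidableEq F] [DecidableEq ι] (hψ : ψ.IsPrimitive) :
    ∑ ξ, (Complex.normSq (indicatorFourier ψ E ξ) : ℂ)
      = (Fintype.card F : ℂ) ^ Fintype.card ι * #E := by
  simp only [normSq_indicatorFourier]
  rw [sum_comm]
  simp only [sum_dotProduct_eq_ite hψ, sub_eq_zero]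
  rw [sum_ite, sum_const_zero, add_zero, sum_const, ← diag_eq_filter, diag_card, nsmul_eq_mul,
    mul_comm]

end Fourier

variable [DecidableEq F]

section Counting

variable {ι : Type*} [Fintype ι]

def normRatioQuadruples (E : Finset (ι → F)) (r : F) :
    Finset (((ι → F) × (ι → F)) × ((ι → F) × (ι → F))) :=
  {z ∈ (E ×ˢ E) ×ˢ (E ×ˢ E) |
    (z.2.1 - z.2.2) ⬝ᵥ (z.2.1 - z.2.2) = r * ((z.1.1 - z.1.2) ⬝ᵥ (z.1.1 - z.1.2))}

noncomputable def normRatioEnergy [DecidableEq ι] (ψ : AddChar F ℂ) (E : Finset (ι → F)) (r : F) : ℝ :=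
  ∑ ξ, ∑ ζ, if ζ ⬝ᵥ ζ = r * (ξ ⬝ᵥ ξ) then
    Complex.normSq (indicatorFourier ψ E ξ) * Complex.normSq (indicatorFourier ψ E ζ) else 0

theorem card_normRatioQuadruples_mul {ψ : AddChar F ℂ} (hψ : ψ.IsPrimitive)
    (E : Finset (ι → F)) (r : F) :
    (#(normRatioQuadruples E r) : ℂ) * Fintype.card F
      = ∑ s, pairDistSum ψ E s * pairDistSum ψ E (-(s * r)) := by
  have hprod (s : F) : pairDistSum ψ E s * pairDistSum ψ E (-(s * r))
      = ∑ z ∈ (E ×ˢ E) ×ˢ (E ×ˢ E), ψ (s * ((z.2.1 - z.2.2) ⬝ᵥ (z.2.1 - z.2.2)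
          - r * ((z.1.1 - z.1.2) ⬝ᵥ (z.1.1 - z.1.2)))) := by
    rw [mul_comm, pairDistSum, pairDistSum, sum_mul_sum, sum_product (s := E ×ˢ E) (t := E ×ˢ E)]
    refine sum_congr rfl fun x _ => sum_congr rfl fun y _ => ?_
    rw [← AddChar.map_add_eq_mul]
    ring_nf
  simp only [hprod]
  rw [sum_comm]
  simp only [AddChar.sum_mulShift _ hψ, sub_eq_zero, Nat.cast_ite, Nat.cast_zero]
  rw [← sum_filter, sum_const, nsmul_eq_mul, normRatioQuadruples]

theorem pow_four_card_le_normRatioEnergy [DecidableEq ι] (ψ : AddChar F ℂ) (E : Finset (ι → F)) (r : F) :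
    (#E : ℝ) ^ 4 ≤ normRatioEnergy ψ E r := by
  have hnonneg (ξ ζ : ι → F) : 0 ≤ if ζ ⬝ᵥ ζ = r * (ξ ⬝ᵥ ξ) then
      Complex.normSq (indicatorFourier ψ E ξ) * Complex.normSq (indicatorFourier ψ E ζ) else 0 := by
    split_ifs
    exacts [mul_nonneg (Complex.normSq_nonneg _) (Complex.normSq_nonneg _), le_rfl]
  have hzero : Complex.normSq (indicatorFourier ψ E 0) = (#E : ℝ) ^ 2 := by
    simp [indicatorFourier, Complex.normSq_natCast, sq]
  calc (#E : ℝ) ^ 4 = if (0 : ι → F) ⬝ᵥ 0 = r * ((0 : ι → F) ⬝ᵥ 0) then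
        Complex.normSq (indicatorFourier ψ E 0) * Complex.normSq (indicatorFourier ψ E 0) else 0 := by
        rw [if_pos (by simp), hzero]; ring
    _ ≤ ∑ ζ, if ζ ⬝ᵥ ζ = r * ((0 : ι → F) ⬝ᵥ 0) then
        Complex.normSq (indicatorFourier ψ E 0) * Complex.normSq (indicatorFourier ψ E ζ) else 0 :=
        single_le_sum (fun ζ _ => hnonneg 0 ζ) (mem_univ _)
    _ ≤ normRatioEnergy ψ E r :=
        single_le_sum (f := fun ξ => ∑ ζ, _) (fun ξ _ => sum_nonneg fun ζ _ => hnonneg ξ ζ)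
          (mem_univ 0)

end Counting

section Plane

variable {ψ : AddChar F ℂ} {E : Finset (Fin 2 → F)}

theorem sq_card_mul_pairDistSum_mul (hF : ringChar F ≠ 2) (hψ : ψ.IsPrimitive) {r s : F}
    (hr : r ≠ 0) (hs : s ≠ 0) :
    (Fintype.card F : ℂ) ^ 2 * (pairDistSum ψ E s * pairDistSum ψ E (-(s * r)))
      = ∑ ξ, ∑ ζ, (Complex.normSq (indicatorFourier ψ E ξ) : ℂ)
          * Complex.normSq (indicatorFourier ψ E ζ)
          * ψ (s⁻¹ * ((ζ ⬝ᵥ ζ - r * (ξ ⬝ᵥ ξ)) / (4 * r))) := by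
  have h4 := four_ne_zero_of_ringChar_ne_two hF
  have hsr : -(s * r) ≠ 0 := by simp [hs, hr]
  have hG {t : F} (ht : t ≠ 0) :
      quadGaussSum ψ (-(4 * t)⁻¹) ^ 2 = quadraticChar F (-1) * Fintype.card F :=
    quadGaussSum_sq hF hψ (by simp [h4, ht])
  have hε : ((quadraticChar F (-1) : ℤ) : ℂ) ^ 2 = 1 := by
    have h := quadraticChar_sq_one (F := F) (a := -1) (by simp)
    exact_mod_cast h
  have e1 := sum_mul_normSq_indicatorFourier (ψ := ψ) (E := E) hF hs
  have e2 := sum_mul_normSq_indicatorFourier (ψ := ψ) (E := E) hF hsr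
  rw [Fintype.card_fin, hG hs] at e1
  rw [Fintype.card_fin, hG hsr] at e2
  -- the sign `χ(-1)` of the two squared Gauss sums cancels
  calc (Fintype.card F : ℂ) ^ 2 * (pairDistSum ψ E s * pairDistSum ψ E (-(s * r)))
      = (quadraticChar F (-1) * Fintype.card F * pairDistSum ψ E s)
          * (quadraticChar F (-1) * Fintype.card F * pairDistSum ψ E (-(s * r))) := by
        linear_combination (-(Fintype.card F : ℂ) ^ 2 * pairDistSum ψ E s
          * pairDistSum ψ E (-(s * r))) * hε
    _ = _ := by
        rw [← e1, ← e2, sum_mul_sum]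
        refine sum_congr rfl fun ξ _ => sum_congr rfl fun ζ _ => ?_
        rw [mul_mul_mul_comm, ← AddChar.map_add_eq_mul, mul_comm]
        congr 2
        field_simp
        ring

theorem sq_card_mul_sum_pairDistSum_mul (hF : ringChar F ≠ 2) (hψ : ψ.IsPrimitive) {r : F}
    (hr : r ≠ 0) :
    (Fintype.card F : ℂ) ^ 2 * ∑ s ∈ univ.erase 0, pairDistSum ψ E s * pairDistSum ψ E (-(s * r))
      = Fintype.card F * normRatioEnergy ψ E r - ((Fintype.card F : ℂ) ^ 2 * #E) ^ 2 := by
  have h4r : 4 * r ≠ 0 := mul_ne_zero (four_ne_zero_of_ringChar_ne_two hF) hr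
  set W : (Fin 2 → F) → ℂ := fun ξ => Complex.normSq (indicatorFourier ψ E ξ)
  have hK : (normRatioEnergy ψ E r : ℂ)
      = ∑ ξ, ∑ ζ, if ζ ⬝ᵥ ζ = r * (ξ ⬝ᵥ ξ) then W ξ * W ζ else 0 := by
    simp only [normRatioEnergy, W, Complex.ofReal_sum, apply_ite Complex.ofReal,
      Complex.ofReal_mul, Complex.ofReal_zero]
  calc (Fintype.card F : ℂ) ^ 2
          * ∑ s ∈ univ.erase 0, pairDistSum ψ E s * pairDistSum ψ E (-(s * r))
      = ∑ ξ, ∑ ζ, W ξ * W ζ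
          * ∑ s ∈ univ.erase 0, ψ (s⁻¹ * ((ζ ⬝ᵥ ζ - r * (ξ ⬝ᵥ ξ)) / (4 * r))) := by
        rw [mul_sum, sum_congr rfl fun s hs =>
          sq_card_mul_pairDistSum_mul hF hψ hr (ne_of_mem_erase hs), sum_comm]
        refine sum_congr rfl fun ξ _ => ?_
        rw [sum_comm]
        simp only [mul_sum, W]
    _ = ∑ ξ, ∑ ζ, ((Fintype.card F : ℂ) * (if ζ ⬝ᵥ ζ = r * (ξ ⬝ᵥ ξ) then W ξ * W ζ else 0)
          - W ξ * W ζ) := by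
        simp only [sum_erase_zero_inv_mul hψ, div_eq_zero_iff, h4r, or_false, sub_eq_zero]
        refine sum_congr rfl fun ξ _ => sum_congr rfl fun ζ _ => ?_
        split_ifs <;> ring
    _ = Fintype.card F * normRatioEnergy ψ E r - (∑ ξ, W ξ) ^ 2 := by
        rw [hK, mul_sum, sq, sum_mul_sum, ← sum_sub_distrib]
        refine sum_congr rfl fun ξ _ => ?_
        rw [mul_sum, ← sum_sub_distrib]
    _ = _ := by rw [sum_normSq_indicatorFourier hψ, Fintype.card_fin]

theorem card_normRatioQuadruples_mul_pow_three (hF : ringChar F ≠ 2) (hψ : ψ.IsPrimitive)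
    (E : Finset (Fin 2 → F)) {r : F} (hr : r ≠ 0) :
    (#(normRatioQuadruples E r) : ℝ) * Fintype.card F ^ 3
      = Fintype.card F ^ 2 * #E ^ 4 + Fintype.card F * normRatioEnergy ψ E r
        - Fintype.card F ^ 4 * #E ^ 2 := by
  have h : (#(normRatioQuadruples E r) : ℂ) * Fintype.card F ^ 3
      = Fintype.card F ^ 2 * #E ^ 4 + Fintype.card F * normRatioEnergy ψ E r
        - Fintype.card F ^ 4 * #E ^ 2 := by
    calc (#(normRatioQuadruples E r) : ℂ) * Fintype.card F ^ 3
        = (Fintype.card F : ℂ) ^ 2 * ∑ s, pairDistSum ψ E s * pairDistSum ψ E (-(s * r)) := by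
          rw [← card_normRatioQuadruples_mul hψ]; ring
      _ = _ := by
          rw [← add_sum_erase _ _ (mem_univ 0), mul_add, sq_card_mul_sum_pairDistSum_mul hF hψ hr,
            zero_mul, neg_zero, pairDistSum_zero]
          ring
  exact_mod_cast h

theorem card_normRatioQuadruples_lower_bound (hF : ringChar F ≠ 2) (hψ : ψ.IsPrimitive)
    (E : Finset (Fin 2 → F)) {r : F} (hr : r ≠ 0) :
    (Fintype.card F ^ 2 + Fintype.card F) * (#E : ℝ) ^ 4 - Fintype.card F ^ 4 * #E ^ 2
      ≤ #(normRatioQuadruples E r) * Fintype.card F ^ 3 := by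
  rw [card_normRatioQuadruples_mul_pow_three hF hψ E hr]
  nlinarith [pow_four_card_le_normRatioEnergy ψ E r, (Fintype.card F).cast_nonneg (α := ℝ)]

omit [Fintype F] in
theorem card_filter_diag_normRatioQuadruples (h : ¬IsSquare (-1 : F)) (E : Finset (Fin 2 → F))
    (r : F) : #{z ∈ normRatioQuadruples E r | z.1.1 = z.1.2} = #E ^ 2 := by
  have hdiag : {z ∈ normRatioQuadruples E r | z.1.1 = z.1.2}
      = (E ×ˢ E).image fun y => ((y.1, y.1), (y.2, y.2)) := by
    ext ⟨⟨x₁, x₂⟩, ⟨y₁, y₂⟩⟩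
    simp only [normRatioQuadruples, mem_filter, mem_product, mem_image, Prod.mk.injEq, Prod.exists]
    constructor
    · rintro ⟨⟨⟨⟨hx₁, -⟩, hy₁, -⟩, hnorm⟩, rfl⟩
      rw [sub_self, dotProduct_zero, mul_zero, dotProduct_self_eq_zero_iff_of_not_isSquare h, sub_eq_zero] at hnorm
      exact ⟨x₁, y₁, ⟨hx₁, hy₁⟩, ⟨rfl, rfl⟩, rfl, hnorm⟩
    · rintro ⟨a, b, ⟨ha, hb⟩, ⟨rfl, rfl⟩, rfl, rfl⟩
      simp [ha, hb]
  rw [hdiag, card_image_of_injective _ fun y y' hy => by simpa [Prod.ext_iff] using hy,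
    card_product, sq]

end Plane

theorem sqnorm_eq_dotProduct_self {p d : ℕ} (v : Fin d → ZMod p) : sqnorm v = v ⬝ᵥ v := by
  simp only [sqnorm, dotProduct, sq]

theorem natCard_eq_card_filter_normRatioQuadruples {p : ℕ} [Fact p.Prime]
    (E : Finset (Fin 2 → ZMod p)) (r : ZMod p) :
    Nat.card {xy : ((Fin 2 → ZMod p) × (Fin 2 → ZMod p)) × ((Fin 2 → ZMod p) × (Fin 2 → ZMod p)) |
        xy.1.1 ∈ E ∧ xy.1.2 ∈ E ∧ xy.2.1 ∈ E ∧ xy.2.2 ∈ E ∧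
        sqnorm (xy.2.1 - xy.2.2) = r * sqnorm (xy.1.1 - xy.1.2) ∧ xy.1.1 ≠ xy.1.2}
      = #{z ∈ normRatioQuadruples E r | z.1.1 ≠ z.1.2} := by
  rw [← Nat.card_eq_finsetCard]
  refine Nat.card_congr (Equiv.subtypeEquivRight fun z => ?_)
  simp only [Set.mem_ofPred_eq, normRatioQuadruples, mem_filter, mem_product,
    sqnorm_eq_dotProduct_self]
  tauto

theorem pow_four_div_lt_of_le {q e S : ℝ} (hq : 0 < q) (he : 2 * q + 1 ≤ e)
    (h : (q ^ 2 + q) * e ^ 4 - q ^ 4 * e ^ 2 ≤ (S + e ^ 2) * q ^ 3) : e ^ 4 / (3 * q) < S := by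
  have he0 : 0 < e := by linarith
  have hgap : 0 < 2 * q * e ^ 2 + 3 * e ^ 2 - 3 * q ^ 3 - 3 * q ^ 2 := by
    nlinarith [mul_le_mul he he (by linarith) he0.le]
  rw [div_lt_iff₀ (by positivity)]
  refine lt_of_mul_lt_mul_right ?_ (pow_nonneg hq.le 3)
  nlinarith [mul_pos (mul_pos (pow_pos hq 2) (pow_pos he0 2)) hgap]

theorem stmt18 (p : ℕ) [Fact p.Prime] (hp4 : p % 4 = 3)
    (r : ZMod p) (hr : r ≠ 0) (E : Finset (Fin 2 → ZMod p)) (hE : 2 * p < E.card) :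
    ((E.card : ℝ)) ^ 4 / (3 * (p : ℝ))
      < (Nat.card {xy : ((Fin 2 → ZMod p) × (Fin 2 → ZMod p)) × ((Fin 2 → ZMod p) × (Fin 2 → ZMod p)) |
          xy.1.1 ∈ E ∧ xy.1.2 ∈ E ∧ xy.2.1 ∈ E ∧ xy.2.2 ∈ E ∧
          sqnorm (xy.2.1 - xy.2.2) = r * sqnorm (xy.1.1 - xy.1.2) ∧ xy.1.1 ≠ xy.1.2} : ℝ) := by
  have hF : ringChar (ZMod p) ≠ 2 := by rw [ZMod.ringChar_zmod_n]; omega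
  have hbound := card_normRatioQuadruples_lower_bound hF (ZMod.isPrimitive_stdAddChar p) E hr
  have hsplit := card_filter_add_card_filter_not (s := normRatioQuadruples E r)
    (fun z => z.1.1 ≠ z.1.2)
  simp only [not_not] at hsplit
  rw [card_filter_diag_normRatioQuadruples (by rw [ZMod.exists_sq_eq_neg_one_iff]; omega)] at hsplit
  rw [← hsplit, ZMod.card] at hbound
  push_cast at hbound
  rw [natCard_eq_card_filter_normRatioQuadruples]
  exact pow_four_div_lt_of_le (Nat.cast_pos.mpr (Fact.out : p.Prime).pos) (by exact_mod_cast hE)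
    hbound
end
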